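/- arXiv:1605.06696 — 6 statements merged into one kernel-verified Lean document; each statement's English description precedes it below -/
import Mathlib

section
/- Let X = (x_{ij}) be an n×n matrix over a commutative ring, let A, B ⊆ {1,…,n} with |A| = |B|, and define the n×n matrix Y = (y_{ij}) by y_{ij} = x_{ij} if (i,j) ∈ A×B or (i,j) ∈ Ã×B̃, and y_{ij} = 0 otherwise. Then X{A|B} = det Y. -/
open Finset

/-- The minor `X(A|B)`: the determinant of the submatrix of `X` with row indices in `A` and
column indices in `B`, taken in increasing order; `0` if `|A| ≠ |B|`. -/
def minorM {m n : ℕ} {R : Type*} [CommRing R]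
    (X : Matrix (Fin m) (Fin n) R) (A : Finset (Fin m)) (B : Finset (Fin n)) : R :=
  if h : A.card = B.card then
    (Matrix.of fun i j : Fin A.card =>
      X (A.orderEmbOfFin rfl i) (B.orderEmbOfFin h.symm j)).det
  else 0

/-- The Laplace product `X{A|B} = (-1)^(ΣA+ΣB) X(A|B) X(Ã|B̃)`, where elements of
`Fin n` are counted as the numbers `1,…,n` (so `i : Fin n` counts as `i+1`). -/
def lap {n : ℕ} {R : Type*} [CommRing R]
    (X : Matrix (Fin n) (Fin n) R) (A B : Finset (Fin n)) : R :=
  (-1 : R) ^ (∑ i ∈ A, ((i : ℕ) + 1) + ∑ j ∈ B, ((j : ℕ) + 1)) *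
    (minorM X A B * minorM X Aᶜ Bᶜ)

/-- The partial order `S ≤ T` on finite subsets of a linearly ordered set:
writing `S = {s₁<⋯<s_p}` and `T = {t₁<⋯<t_q}`, it means `p ≥ q` and `s_ν ≤ t_ν` for `ν ≤ q`. -/
def domLE {α : Type*} [LinearOrder α] (S T : Finset α) : Prop :=
  T.card ≤ S.card ∧ ∀ (ν : ℕ) (hT : ν < (T.sort (· ≤ ·)).length)
    (hS : ν < (S.sort (· ≤ ·)).length),
    (S.sort (· ≤ ·))[ν] ≤ (T.sort (· ≤ ·))[ν]

/-- A subset `S ⊆ {1,…,n}` is good if `S ≤ S̃` where `S̃` is the complement of `S`. -/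
def goodSet {n : ℕ} (S : Finset (Fin n)) : Prop := domLE S Sᶜ

/-- The generic `m×n` matrix, whose entries are the indeterminates `x_{ij}`. -/
noncomputable def genX (m n : ℕ) (R : Type*) [CommRing R] :
    Matrix (Fin m) (Fin n) (MvPolynomial (Fin m × Fin n) R) :=
  Matrix.of fun i j => MvPolynomial.X (i, j)

open Finset

section helpers

variable {n : ℕ}

/-- The permutation of `Fin n` sending `[0, S.card)` to the elements of `S` in increasing
order and the rest to the elements of `Sᶜ` in increasing order. -/
noncomputable def permSort (S : Finset (Fin n)) : Equiv.Perm (Fin n) :=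
  Equiv.ofBijective
    (fun x => if h : (x : ℕ) < S.card then S.orderEmbOfFin rfl ⟨x, h⟩
      else Sᶜ.orderEmbOfFin rfl ⟨(x : ℕ) - S.card, by
        have h1 : S.card + Sᶜ.card = n := by
          simpa using Finset.card_add_card_compl S
        omega⟩)
    (by
      have hinj : Function.Injective
          (fun x : Fin n => if h : (x : ℕ) < S.card then S.orderEmbOfFin rfl ⟨x, h⟩
            else Sᶜ.orderEmbOfFin rfl ⟨(x : ℕ) - S.card, by
              have h1 : S.card + Sᶜ.card = n := by
                simpa using Finset.card_add_card_compl S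
              omega⟩) := by
        intro x y hxy
        dsimp only at hxy
        split_ifs at hxy with h1 h2 h2
        · have h := (S.orderEmbOfFin rfl).injective hxy
          rw [Fin.mk.injEq] at h
          exact Fin.ext h
        · have hm1 : S.orderEmbOfFin rfl ⟨(x : ℕ), h1⟩ ∈ S := Finset.orderEmbOfFin_mem _ _ _
          rw [hxy] at hm1
          exact absurd hm1 (Finset.mem_compl.1 (Finset.orderEmbOfFin_mem _ _ _))
        · have hm1 : S.orderEmbOfFin rfl ⟨(y : ℕ), h2⟩ ∈ S := Finset.orderEmbOfFin_mem _ _ _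
          rw [← hxy] at hm1
          exact absurd hm1 (Finset.mem_compl.1 (Finset.orderEmbOfFin_mem _ _ _))
        · have h := (Sᶜ.orderEmbOfFin rfl).injective hxy
          rw [Fin.mk.injEq] at h
          exact Fin.ext (by omega)
      exact Finite.injective_iff_bijective.1 hinj)

lemma permSort_apply_lt (S : Finset (Fin n)) (x : Fin n) (h : (x : ℕ) < S.card) :
    permSort S x = S.orderEmbOfFin rfl ⟨x, h⟩ := by
  simp only [permSort, Equiv.ofBijective_apply, dif_pos h]

lemma permSort_apply_ge (S : Finset (Fin n)) (x : Fin n) (h : ¬ (x : ℕ) < S.card) :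
    permSort S x = Sᶜ.orderEmbOfFin rfl ⟨(x : ℕ) - S.card, by
      have h1 : S.card + Sᶜ.card = n := by simpa using Finset.card_add_card_compl S
      omega⟩ := by
  simp only [permSort, Equiv.ofBijective_apply, dif_neg h]

lemma swap_lt_of_ne_a {a b x y : Fin n} (hba : (b : ℕ) + 1 = (a : ℕ))
    (hxa : x ≠ a) (hya : y ≠ a) (hxy : x < y) :
    Equiv.swap b a x < Equiv.swap b a y := by
  simp only [Equiv.swap_apply_def]
  have hv : (x : ℕ) < (y : ℕ) := hxy
  have h1 : (x : ℕ) ≠ (a : ℕ) := fun h => hxa (Fin.ext h)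
  have h2 : (y : ℕ) ≠ (a : ℕ) := fun h => hya (Fin.ext h)
  split_ifs <;> (subst_vars; rw [Fin.lt_def]; omega)

lemma swap_lt_of_ne_b {a b x y : Fin n} (hba : (b : ℕ) + 1 = (a : ℕ))
    (hxb : x ≠ b) (hyb : y ≠ b) (hxy : x < y) :
    Equiv.swap b a x < Equiv.swap b a y := by
  simp only [Equiv.swap_apply_def]
  have hv : (x : ℕ) < (y : ℕ) := hxy
  have h1 : (x : ℕ) ≠ (b : ℕ) := fun h => hxb (Fin.ext h)
  have h2 : (y : ℕ) ≠ (b : ℕ) := fun h => hyb (Fin.ext h)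
  split_ifs <;> (subst_vars; rw [Fin.lt_def]; omega)

lemma sign_permSort_aux (m : ℕ) : ∀ (S : Finset (Fin n)), (∑ s ∈ S, (s : ℕ)) = m →
    Equiv.Perm.sign (permSort S) =
      (-1 : ℤˣ) ^ (∑ s ∈ S, (s : ℕ) + ∑ i ∈ Finset.range S.card, i) := by
  induction m using Nat.strong_induction_on with
  | _ m ih =>
    intro S hm
    by_cases hex : ∃ a b : Fin n, a ∈ S ∧ b ∉ S ∧ (b : ℕ) + 1 = (a : ℕ)
    · obtain ⟨a, b, ha, hb, hba⟩ := hex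
      have hne : b ≠ a := fun h => hb (h ▸ ha)
      set S' : Finset (Fin n) := insert b (S.erase a) with hS'
      have hbe : b ∉ S.erase a := fun h => hb (Finset.mem_of_mem_erase h)
      have hcard : S'.card = S.card := by
        rw [hS', Finset.card_insert_of_notMem hbe, Finset.card_erase_of_mem ha]
        have : 1 ≤ S.card := Finset.card_pos.2 ⟨a, ha⟩
        omega
      have hsum : (∑ s ∈ S', (s : ℕ)) + 1 = m := by
        rw [hS', Finset.sum_insert hbe]
        have h2 : (a : ℕ) + ∑ x ∈ S.erase a, (x : ℕ) = ∑ x ∈ S, (x : ℕ) :=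
          Finset.add_sum_erase _ _ ha
        omega
      have haS' : a ∉ S' := by
        simp only [hS', Finset.mem_insert, Finset.mem_erase]
        push_neg
        exact ⟨hne.symm, fun h => absurd rfl h⟩
      have hbS' : b ∈ S' := Finset.mem_insert_self _ _
      have hcc : S'ᶜ.card = Sᶜ.card := by rw [Finset.card_compl, Finset.card_compl, hcard]
      -- the embedding of S
      have hembS : (fun i : Fin S.card => Equiv.swap b a (S'.orderEmbOfFin hcard i)) =
          S.orderEmbOfFin rfl := by
        apply Finset.orderEmbOfFin_unique
        · intro i
          have hmem : S'.orderEmbOfFin hcard i ∈ S' := Finset.orderEmbOfFin_mem _ _ _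
          rcases eq_or_ne (S'.orderEmbOfFin hcard i) b with h | h
          · rw [h, Equiv.swap_apply_left]; exact ha
          · have hna : S'.orderEmbOfFin hcard i ≠ a := fun hh => haS' (hh ▸ hmem)
            rw [Equiv.swap_apply_of_ne_of_ne h hna]
            rcases Finset.mem_insert.1 hmem with hh | hh
            · exact absurd hh h
            · exact Finset.mem_of_mem_erase hh
        · intro i j hij
          have hm1 : S'.orderEmbOfFin hcard i ∈ S' := Finset.orderEmbOfFin_mem _ _ _
          have hm2 : S'.orderEmbOfFin hcard j ∈ S' := Finset.orderEmbOfFin_mem _ _ _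
          exact swap_lt_of_ne_a hba (fun h => haS' (h ▸ hm1)) (fun h => haS' (h ▸ hm2))
            ((S'.orderEmbOfFin hcard).strictMono hij)
      have hembC : (fun j : Fin Sᶜ.card => Equiv.swap b a (S'ᶜ.orderEmbOfFin hcc j)) =
          Sᶜ.orderEmbOfFin rfl := by
        apply Finset.orderEmbOfFin_unique
        · intro j
          have hmem : S'ᶜ.orderEmbOfFin hcc j ∈ S'ᶜ := Finset.orderEmbOfFin_mem _ _ _
          have hmem' := Finset.mem_compl.1 hmem
          rcases eq_or_ne (S'ᶜ.orderEmbOfFin hcc j) a with h | h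
          · rw [h, Equiv.swap_apply_right]
            exact Finset.mem_compl.2 hb
          · have hnb : S'ᶜ.orderEmbOfFin hcc j ≠ b := fun hh => hmem' (hh ▸ hbS')
            rw [Equiv.swap_apply_of_ne_of_ne hnb h]
            refine Finset.mem_compl.2 (fun hmemS => hmem' ?_)
            exact Finset.mem_insert_of_mem (Finset.mem_erase.2 ⟨h, hmemS⟩)
        · intro i j hij
          have hm1 : S'ᶜ.orderEmbOfFin hcc i ∈ S'ᶜ := Finset.orderEmbOfFin_mem _ _ _
          have hm2 : S'ᶜ.orderEmbOfFin hcc j ∈ S'ᶜ := Finset.orderEmbOfFin_mem _ _ _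
          exact swap_lt_of_ne_b hba (fun h => (Finset.mem_compl.1 hm1) (h ▸ hbS'))
            (fun h => (Finset.mem_compl.1 hm2) (h ▸ hbS'))
            ((S'ᶜ.orderEmbOfFin hcc).strictMono hij)
      have hperm : permSort S = Equiv.swap b a * permSort S' := by
        apply Equiv.ext
        intro x
        rw [Equiv.Perm.mul_apply]
        by_cases h : (x : ℕ) < S.card
        · rw [permSort_apply_lt S x h, permSort_apply_lt S' x (hcard ▸ h), ← hembS]
          exact congrArg (Equiv.swap b a) (Finset.orderEmbOfFin_eq_orderEmbOfFin_iff.2 rfl)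
        · rw [permSort_apply_ge S x h, permSort_apply_ge S' x (by rw [hcard]; exact h),
            ← hembC]
          exact congrArg (Equiv.swap b a)
            (Finset.orderEmbOfFin_eq_orderEmbOfFin_iff.2 (by simp only [Fin.val_mk]; omega))
      have hm1 : (∑ s ∈ S', (s : ℕ)) < m := by omega
      have ihS' := ih _ hm1 S' rfl
      rw [hperm, Equiv.Perm.sign_mul, Equiv.Perm.sign_swap hne, ihS', hcard]
      have hexp : m + ∑ i ∈ Finset.range S.card, i =
          ((∑ s ∈ S', (s : ℕ)) + ∑ i ∈ Finset.range S.card, i) + 1 := by omega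
      rw [hm, hexp, pow_succ]
      exact (neg_one_mul _).trans (mul_neg_one _).symm
    · push_neg at hex
      -- S is downward closed
      have hdc : ∀ j : ℕ, ∀ a : Fin n, a ∈ S → (a : ℕ) = j → ∀ b : Fin n, b ≤ a → b ∈ S := by
        intro j
        induction j using Nat.strong_induction_on with
        | _ j ihj =>
          intro a ha haj b hba
          rcases eq_or_lt_of_le hba with rfl | hlt
          · exact ha
          · have hj0 : 0 < j := by
              have : (b : ℕ) < (a : ℕ) := hlt
              omega
            have hlt' : (a : ℕ) - 1 < n := by omega
            set a' : Fin n := ⟨(a : ℕ) - 1, hlt'⟩ with ha'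
            have ha'S : a' ∈ S := by
              by_contra h
              exact (hex a a' ha h) (by simp [ha']; omega)
            have hba' : b ≤ a' := by
              have h1 : (b : ℕ) < (a : ℕ) := hlt
              exact Fin.le_def.2 (by simp [ha']; omega)
            exact ihj ((a : ℕ) - 1) (by omega) a' ha'S rfl b hba'
      have hkn : S.card ≤ n := by
        have := Finset.card_le_univ S
        simpa using this
      have hlow : ∀ x : Fin n, x ∈ S ↔ (x : ℕ) < S.card := by
        intro x
        constructor
        · intro hx
          have hsub : Finset.Iic x ⊆ S := fun y hy =>
            hdc (x : ℕ) x hx rfl y (Finset.mem_Iic.1 hy)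
          have hc := Finset.card_le_card hsub
          rw [Fin.card_Iic] at hc
          omega
        · intro hx
          by_contra hxS
          have hsub : S ⊆ Finset.Iio x := by
            intro s hs
            rcases lt_or_ge s x with h | h
            · exact Finset.mem_Iio.2 h
            · exact absurd (hdc (s : ℕ) s hs rfl x h) hxS
          have hc := Finset.card_le_card hsub
          rw [Fin.card_Iio] at hc
          omega
      have hemb1 : (fun i : Fin S.card => (⟨(i : ℕ), lt_of_lt_of_le i.2 hkn⟩ : Fin n)) =
          S.orderEmbOfFin rfl := by
        apply Finset.orderEmbOfFin_unique
        · intro i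
          exact (hlow _).2 i.2
        · intro i j hij
          exact Fin.lt_def.2 hij
      have hc1 : S.card + Sᶜ.card = n := by simpa using Finset.card_add_card_compl S
      have hemb2 : (fun j : Fin Sᶜ.card => (⟨S.card + (j : ℕ), by omega⟩ : Fin n)) =
          Sᶜ.orderEmbOfFin rfl := by
        apply Finset.orderEmbOfFin_unique
        · intro j
          refine Finset.mem_compl.2 (fun h => ?_)
          have := (hlow _).1 h
          simp at this
        · intro i j hij
          exact Fin.lt_def.2 (by simpa using hij)
      have hid : permSort S = 1 := by
        apply Equiv.ext
        intro x
        by_cases h : (x : ℕ) < S.card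
        · rw [permSort_apply_lt S x h, ← hemb1]
          exact Fin.ext rfl
        · rw [permSort_apply_ge S x h, ← hemb2]
          apply Fin.ext
          simp only [Equiv.Perm.coe_one, id_eq]
          omega
      have hsumeq : (∑ s ∈ S, (s : ℕ)) = ∑ i ∈ Finset.range S.card, i := by
        apply Finset.sum_bij (i := fun (s : Fin n) (_ : s ∈ S) => (s : ℕ))
        · intro a ha
          exact Finset.mem_range.2 ((hlow a).1 ha)
        · intro a ha b hb hab
          exact Fin.ext hab
        · intro b hb
          have hbn : b < n := lt_of_lt_of_le (Finset.mem_range.1 hb) hkn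
          exact ⟨⟨b, hbn⟩, (hlow _).2 (Finset.mem_range.1 hb), rfl⟩
        · intro a ha; rfl
      rw [hid, Equiv.Perm.sign_one, hsumeq, ← two_mul]
      exact (Even.neg_one_pow ⟨_, (two_mul _)⟩).symm

theorem sign_permSort (S : Finset (Fin n)) :
    Equiv.Perm.sign (permSort S) =
      (-1 : ℤˣ) ^ (∑ s ∈ S, (s : ℕ) + ∑ i ∈ Finset.range S.card, i) :=
  sign_permSort_aux _ S rfl

end helpers

open Finset in
theorem statement0' {n : ℕ} {R : Type*} [CommRing R] (X : Matrix (Fin n) (Fin n) R)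
    (A B : Finset (Fin n)) (hAB : A.card = B.card)
    (Y : Matrix (Fin n) (Fin n) R)
    (hY : ∀ i j, Y i j = if (i ∈ A ∧ j ∈ B) ∨ (i ∈ Aᶜ ∧ j ∈ Bᶜ) then X i j else 0) :
    ((-1 : R) ^ (∑ i ∈ A, ((i : ℕ) + 1) + ∑ j ∈ B, ((j : ℕ) + 1)) *
      ((Matrix.of fun i j : Fin A.card =>
        X (A.orderEmbOfFin rfl i) (B.orderEmbOfFin hAB.symm j)).det *
       (Matrix.of fun i j : Fin Aᶜ.card =>
        X (Aᶜ.orderEmbOfFin rfl i)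
          (Bᶜ.orderEmbOfFin (by rw [Finset.card_compl, Finset.card_compl, hAB] : Bᶜ.card = Aᶜ.card) j)).det))
      = Y.det := by
  classical
  have hABc : Aᶜ.card = Bᶜ.card := by rw [Finset.card_compl, Finset.card_compl, hAB]
  have hcA : A.card + Aᶜ.card = n := by simpa using Finset.card_add_card_compl A
  set M1 : Matrix (Fin A.card) (Fin A.card) R :=
    Matrix.of fun i j : Fin A.card =>
      X (A.orderEmbOfFin rfl i) (B.orderEmbOfFin hAB.symm j) with hM1
  set M2 : Matrix (Fin Aᶜ.card) (Fin Aᶜ.card) R :=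
    Matrix.of fun i j : Fin Aᶜ.card =>
      X (Aᶜ.orderEmbOfFin rfl i) (Bᶜ.orderEmbOfFin hABc.symm j) with hM2
  set cA : Fin A.card ⊕ Fin Aᶜ.card ≃ Fin n := finSumFinEquiv.trans (finCongr hcA) with hcAdef
  set pA := permSort A with hpA
  set pB := permSort B with hpB
  have hcA_l : ∀ i : Fin A.card, ((cA (Sum.inl i) : Fin n) : ℕ) = (i : ℕ) := by
    intro i; simp [hcAdef]
  have hcA_r : ∀ j : Fin Aᶜ.card, ((cA (Sum.inr j) : Fin n) : ℕ) = A.card + (j : ℕ) := by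
    intro j; simp [hcAdef]
  -- values of the composed maps
  have lemA_l : ∀ i : Fin A.card, pA (cA (Sum.inl i)) = A.orderEmbOfFin rfl i := by
    intro i
    have h : ((cA (Sum.inl i) : Fin n) : ℕ) < A.card := by rw [hcA_l]; exact i.2
    rw [hpA, permSort_apply_lt A _ h]
    exact Finset.orderEmbOfFin_eq_orderEmbOfFin_iff.2 (by simp [hcA_l i])
  have lemA_r : ∀ j : Fin Aᶜ.card, pA (cA (Sum.inr j)) = Aᶜ.orderEmbOfFin rfl j := by
    intro j
    have h : ¬ ((cA (Sum.inr j) : Fin n) : ℕ) < A.card := by rw [hcA_r]; omega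
    rw [hpA, permSort_apply_ge A _ h]
    exact Finset.orderEmbOfFin_eq_orderEmbOfFin_iff.2 (by simp [hcA_r j])
  have lemB_l : ∀ i : Fin A.card, pB (cA (Sum.inl i)) = B.orderEmbOfFin hAB.symm i := by
    intro i
    have h : ((cA (Sum.inl i) : Fin n) : ℕ) < B.card := by rw [hcA_l, ← hAB]; exact i.2
    rw [hpB, permSort_apply_lt B _ h]
    exact Finset.orderEmbOfFin_eq_orderEmbOfFin_iff.2 (by simp [hcA_l i])
  have lemB_r : ∀ j : Fin Aᶜ.card, pB (cA (Sum.inr j)) = Bᶜ.orderEmbOfFin hABc.symm j := by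
    intro j
    have h : ¬ ((cA (Sum.inr j) : Fin n) : ℕ) < B.card := by rw [hcA_r, ← hAB]; omega
    rw [hpB, permSort_apply_ge B _ h]
    exact Finset.orderEmbOfFin_eq_orderEmbOfFin_iff.2 (by simp [hcA_r j, ← hAB])
  -- the block structure
  have hblocks : (Y.submatrix (fun x => pA (cA x)) (fun x => pB (cA x))) =
      Matrix.fromBlocks M1 0 0 M2 := by
    ext i j
    rcases i with i | i <;> rcases j with j | j <;>
      simp only [Matrix.submatrix_apply, Matrix.fromBlocks_apply₁₁, Matrix.fromBlocks_apply₁₂,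
        Matrix.fromBlocks_apply₂₁, Matrix.fromBlocks_apply₂₂, Matrix.zero_apply]
    · rw [lemA_l, lemB_l, hY]
      rw [if_pos (Or.inl ⟨Finset.orderEmbOfFin_mem _ _ _, Finset.orderEmbOfFin_mem _ _ _⟩)]
      rfl
    · rw [lemA_l, lemB_r, hY, if_neg]
      push_neg
      refine ⟨fun _ => Finset.mem_compl.1 (Finset.orderEmbOfFin_mem Bᶜ hABc.symm j), ?_⟩
      intro h
      exact absurd (Finset.orderEmbOfFin_mem A rfl i) (Finset.mem_compl.1 h)
    · rw [lemA_r, lemB_l, hY, if_neg]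
      push_neg
      refine ⟨fun h => absurd h (Finset.mem_compl.1 (Finset.orderEmbOfFin_mem Aᶜ rfl i)), ?_⟩
      intro _ hc
      exact (Finset.mem_compl.1 hc) (Finset.orderEmbOfFin_mem B hAB.symm j)
    · rw [lemA_r, lemB_r, hY]
      rw [if_pos (Or.inr ⟨Finset.orderEmbOfFin_mem _ _ _, Finset.orderEmbOfFin_mem _ _ _⟩)]
      rfl
  have hdet1 : (Y.submatrix (fun x => pA (cA x)) (fun x => pB (cA x))).det =
      M1.det * M2.det := by
    rw [hblocks, Matrix.det_fromBlocks_zero₂₁]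
  have hdet2 : (Y.submatrix (fun x => pA (cA x)) (fun x => pB (cA x))).det =
      ((Equiv.Perm.sign pA : ℤ) : R) * ((Equiv.Perm.sign pB : ℤ) : R) * Y.det := by
    have e1 : (Y.submatrix (fun x => pA (cA x)) (fun x => pB (cA x))) =
        ((Y.submatrix pA pB).submatrix cA cA) := rfl
    rw [e1, Matrix.det_submatrix_equiv_self]
    have e2 : (Y.submatrix (⇑pA) (⇑pB)) = ((Y.submatrix (⇑pA) id).submatrix id (⇑pB)) := rfl
    rw [e2, Matrix.det_permute', Matrix.det_permute]
    push_cast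
    ring
  -- sign computation
  have hsA := sign_permSort A
  have hsB := sign_permSort B
  have hcast : ∀ (S : Finset (Fin n)),
      ((Equiv.Perm.sign (permSort S) : ℤ) : R) =
        (-1 : R) ^ (∑ s ∈ S, (s : ℕ) + ∑ i ∈ Finset.range S.card, i) := by
    intro S
    rw [sign_permSort S]
    push_cast
    norm_num
  have hsum : ∀ (S : Finset (Fin n)), ∑ i ∈ S, ((i : ℕ) + 1) = (∑ i ∈ S, (i : ℕ)) + S.card := by
    intro S
    rw [Finset.sum_add_distrib, Finset.sum_const, smul_eq_mul, mul_one]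
  -- put it together
  have key : M1.det * M2.det =
      ((-1 : R) ^ (∑ s ∈ A, (s : ℕ) + ∑ i ∈ Finset.range A.card, i) *
       (-1 : R) ^ (∑ s ∈ B, (s : ℕ) + ∑ i ∈ Finset.range B.card, i)) * Y.det := by
    rw [← hdet1, hdet2, hpA, hpB, hcast A, hcast B]
    try ring
  have heven : Even (∑ i ∈ A, ((i : ℕ) + 1) + ∑ j ∈ B, ((j : ℕ) + 1) +
      ((∑ s ∈ A, (s : ℕ) + ∑ i ∈ Finset.range A.card, i) +
       (∑ s ∈ B, (s : ℕ) + ∑ i ∈ Finset.range B.card, i))) := by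
    rw [hsum A, hsum B, ← hAB]
    exact ⟨∑ s ∈ A, (s:ℕ) + ∑ s ∈ B, (s:ℕ) + A.card + ∑ i ∈ Finset.range A.card, i, by ring⟩
  calc (-1 : R) ^ (∑ i ∈ A, ((i : ℕ) + 1) + ∑ j ∈ B, ((j : ℕ) + 1)) * (M1.det * M2.det)
      = (-1 : R) ^ (∑ i ∈ A, ((i : ℕ) + 1) + ∑ j ∈ B, ((j : ℕ) + 1) +
          ((∑ s ∈ A, (s : ℕ) + ∑ i ∈ Finset.range A.card, i) +
           (∑ s ∈ B, (s : ℕ) + ∑ i ∈ Finset.range B.card, i))) * Y.det := by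
        rw [key, pow_add, pow_add]
        ring
    _ = Y.det := by rw [Even.neg_one_pow heven, one_mul]

/-- Lemma 1: if `Y` agrees with `X` on `A×B` and `Ã×B̃` and vanishes elsewhere,
then `X{A|B} = det Y`. -/
theorem statement0 {n : ℕ} {R : Type*} [CommRing R] (X : Matrix (Fin n) (Fin n) R)
    (A B : Finset (Fin n)) (hAB : A.card = B.card)
    (Y : Matrix (Fin n) (Fin n) R)
    (hY : ∀ i j, Y i j = if (i ∈ A ∧ j ∈ B) ∨ (i ∈ Aᶜ ∧ j ∈ Bᶜ) then X i j else 0) :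
    lap X A B = Y.det := by
  have hc : Aᶜ.card = Bᶜ.card := by rw [Finset.card_compl, Finset.card_compl, hAB]
  rw [lap, minorM, minorM, dif_pos hAB, dif_pos hc]
  exact statement0' X A B hAB Y hY
end

section
/- Let σ be a permutation of {1,…,n} and let X be the permutation matrix with entries x_{ij} = δ_{σ(i),j}. Then for subsets A, B ⊆ {1,…,n}, the Laplace product satisfies X{A|B} = sgn(σ) if σ(A) = B, and X{A|B} = 0 otherwise. -/
open Finset

open Equiv

/-! Only minors with `σ(A) = B` survive in a permutation matrix, and such a minor is the sign of the
permutation of positions `Fin #A` that `σ` induces from `A` to `B`, both listed increasingly.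
Let `sh_A` list `A` increasingly in the first `#A` positions and `Aᶜ` in the remaining ones. Then
`σ ∘ sh_A = sh_B ∘ (σ|_A ⊕ σ|_Aᶜ)`, so `sgn σ = sgn sh_A · sgn sh_B · sgn σ|_A · sgn σ|_Aᶜ`.
The inversions of `sh_A` are the pairs `c < a` with `c ∉ A`, `a ∈ A`; there are
`ΣA - #A(#A-1)/2` of them, so the two shuffles contribute `(-1)^(ΣA+ΣB)` when `#A = #B`. -/

theorem Finset.sum_card_filter_Iio_notMem_add_sum_range {n : ℕ} (s : Finset (Fin n)) :
    ∑ j ∈ s, #{i ∈ Iio j | i ∉ s} + ∑ i ∈ range #s, i = ∑ j ∈ s, (j : ℕ) := by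
  induction s using Finset.induction_on_max with
  | empty => simp
  | insert a s hlt ih =>
    have ha : a ∉ s := fun h => lt_irrefl a (hlt a h)
    have hIio : #{i ∈ Iio a | i ∉ s} + #s = a := by
      have hs : {i ∈ Iio a | i ∈ s} = s := by
        rw [filter_mem_eq_inter, inter_eq_right.2 fun i hi => mem_Iio.2 (hlt i hi)]
      rw [← Fin.card_Iio a, ← card_filter_add_card_filter_not (s := Iio a) (· ∈ s), hs, add_comm]
    have hj : ∀ j ∈ insert a s, #{i ∈ Iio j | i ∉ insert a s} = #{i ∈ Iio j | i ∉ s} := by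
      intro j hj
      have hja : j ≤ a := (mem_insert.1 hj).elim le_of_eq fun h => (hlt j h).le
      congr 1
      refine filter_congr fun i hi => ?_
      simp [((mem_Iio.1 hi).trans_le hja).ne]
    rw [sum_congr rfl hj, sum_insert ha, sum_insert ha, card_insert_of_notMem ha, sum_range_succ,
      ← ih]
    omega

namespace Finset
variable {n m l : ℕ} (s : Finset (Fin n)) (hm : #s = m) (hl : #sᶜ = l)

def shufflePerm : Perm (Fin n) :=
  (finSumFinEquiv.trans
    (finCongr (by rw [← hm, ← hl, card_add_card_compl, Fintype.card_fin]))).symm.trans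
      (finSumEquivOfFinset hm hl)

theorem shufflePerm_symm_lt_iff {i j : Fin n} (hij : i < j) :
    (s.shufflePerm hm hl).symm i < (s.shufflePerm hm hl).symm j ↔ (j ∈ s → i ∈ s) := by
  obtain ⟨x, rfl⟩ := (finSumEquivOfFinset hm hl).surjective i
  obtain ⟨y, rfl⟩ := (finSumEquivOfFinset hm hl).surjective j
  simp only [shufflePerm, symm_trans_apply, symm_symm, symm_apply_apply]
  have hA := s.orderEmbOfFin_mem hm
  have hAc := fun p => mem_compl.1 (sᶜ.orderEmbOfFin_mem hl p)
  rcases x with p | p <;> rcases y with q | q <;>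
    simp only [finSumEquivOfFinset_inl, finSumEquivOfFinset_inr, OrderEmbedding.lt_iff_lt, hA, hAc,
      trans_apply, finCongr_apply, finSumFinEquiv_apply_left, finSumFinEquiv_apply_right,
      Fin.lt_def, Fin.val_cast, Fin.val_castAdd, Fin.val_natAdd, imp_self, implies_true, imp_false,
      not_true_eq_false, iff_true, iff_false] at hij ⊢ <;> omega

theorem sign_shufflePerm_eq_pow_sum_card :
    Perm.sign (s.shufflePerm hm hl) = (-1) ^ ∑ j ∈ s, #{i ∈ Iio j | i ∉ s} := by
  rw [← Perm.sign_symm, Perm.sign_eq_prod_prod_Iio]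
  calc ∏ j, ∏ i ∈ Iio j,
        (if (s.shufflePerm hm hl).symm i < (s.shufflePerm hm hl).symm j then (1 : ℤˣ) else -1)
      = ∏ j, if j ∈ s then ∏ i ∈ Iio j, (if i ∈ s then 1 else -1) else 1 := by
        refine prod_congr rfl fun j _ => ?_
        split_ifs with hj
        · exact prod_congr rfl fun i hi => by
            simp only [shufflePerm_symm_lt_iff s hm hl (mem_Iio.1 hi), hj, forall_const]
        · exact prod_eq_one fun i hi => by
            simp only [shufflePerm_symm_lt_iff s hm hl (mem_Iio.1 hi), hj, false_imp_iff, if_true]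
    _ = (-1) ^ ∑ j ∈ s, #{i ∈ Iio j | i ∉ s} := by
        rw [prod_ite_mem, univ_inter, ← prod_pow_eq_pow_sum]
        exact prod_congr rfl fun j _ => by
          rw [prod_ite, prod_const_one, one_mul, prod_const]

theorem sign_shufflePerm :
    Perm.sign (s.shufflePerm hm hl) = (-1) ^ (∑ j ∈ s, (j : ℕ) + ∑ i ∈ range m, i) := by
  rw [sign_shufflePerm_eq_pow_sum_card, ← sum_card_filter_Iio_notMem_add_sum_range, hm,
    add_assoc, ← two_mul, pow_add, pow_mul, Int.units_sq, one_pow, mul_one]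

end Finset

namespace Equiv.Perm
variable {n : ℕ} (σ : Perm (Fin n)) {A B : Finset (Fin n)}

theorem mem_compl_iff_of_mem_iff (h : ∀ x, x ∈ A ↔ σ x ∈ B) : ∀ x, x ∈ Aᶜ ↔ σ x ∈ Bᶜ := by
  simpa using fun x => (h x).not

theorem card_eq_of_mem_iff (h : ∀ x, x ∈ A ↔ σ x ∈ B) : #B = #A :=
  (card_eq_of_equiv (σ.subtypeEquiv h)).symm

def inducedPerm (A B : Finset (Fin n)) (h : ∀ x, x ∈ A ↔ σ x ∈ B) : Perm (Fin #A) :=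
  (A.orderIsoOfFin rfl).toEquiv.trans <|
    (σ.subtypeEquiv h).trans (B.orderIsoOfFin (σ.card_eq_of_mem_iff h)).toEquiv.symm

theorem orderEmbOfFin_inducedPerm (h : ∀ x, x ∈ A ↔ σ x ∈ B) (hB : #B = #A) (i : Fin #A) :
    B.orderEmbOfFin hB (σ.inducedPerm A B h i) = σ (A.orderEmbOfFin rfl i) := by
  simp [inducedPerm, ← coe_orderIsoOfFin_apply]

theorem sign_eq_mul_sign_inducedPerm (h : ∀ x, x ∈ A ↔ σ x ∈ B) :
    sign σ = (-1) ^ (∑ i ∈ A, (i : ℕ) + ∑ j ∈ B, (j : ℕ)) * sign (σ.inducedPerm A B h) *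
      sign (σ.inducedPerm Aᶜ Bᶜ (σ.mem_compl_iff_of_mem_iff h)) := by
  have hc := σ.mem_compl_iff_of_mem_iff h
  have hB := σ.card_eq_of_mem_iff h
  have hBc := σ.card_eq_of_mem_iff hc
  have hconj : σ * A.shufflePerm rfl rfl = B.shufflePerm hB hBc *
      (finSumFinEquiv.trans (finCongr (by rw [card_add_card_compl, Fintype.card_fin]))).permCongr
        (sumCongr (σ.inducedPerm A B h) (σ.inducedPerm Aᶜ Bᶜ hc)) := by
    ext x
    simp only [Perm.mul_apply, shufflePerm, permCongr_apply, trans_apply]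
    generalize (finSumFinEquiv.trans (finCongr _)).symm x = y
    rcases y with p | p <;> simp [orderEmbOfFin_inducedPerm]
  have hsq : ∀ u : ℤˣ, u * u = 1 := Int.units_mul_self
  calc sign σ = sign σ * sign (A.shufflePerm rfl rfl) * sign (A.shufflePerm rfl rfl) := by
        rw [mul_assoc, hsq, mul_one]
    _ = sign (B.shufflePerm hB hBc) *
          (sign (σ.inducedPerm A B h) * sign (σ.inducedPerm Aᶜ Bᶜ hc)) *
            sign (A.shufflePerm rfl rfl) := by
        rw [← map_mul, hconj, map_mul, sign_permCongr, sign_sumCongr]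
    _ = _ := by
        rw [sign_shufflePerm, sign_shufflePerm, pow_add, pow_add, pow_add]
        calc _ = (-1) ^ (∑ i ∈ A, (i : ℕ)) * (-1) ^ (∑ j ∈ B, (j : ℕ)) *
              sign (σ.inducedPerm A B h) * sign (σ.inducedPerm Aᶜ Bᶜ hc) *
                ((-1) ^ (∑ i ∈ range #A, i) * (-1) ^ (∑ i ∈ range #A, i)) := by ac_rfl
          _ = _ := by rw [hsq, mul_one]

end Equiv.Perm

theorem Equiv.Perm.permMatrix_apply {ι R : Type*} [DecidableEq ι] [Zero R] [One R] (σ : Perm ι)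
    (i j : ι) : σ.permMatrix R i j = if σ i = j then 1 else 0 := by
  simp [PEquiv.toMatrix_apply]

section PermMatrix
variable {n : ℕ} {R : Type*} [CommRing R] (σ : Perm (Fin n)) {A B : Finset (Fin n)}

theorem minorM_permMatrix_of_mem_iff (h : ∀ x, x ∈ A ↔ σ x ∈ B) :
    minorM (σ.permMatrix R) A B = ((Perm.sign (σ.inducedPerm A B h) : ℤ) : R) := by
  rw [minorM, dif_pos (σ.card_eq_of_mem_iff h).symm, ← Matrix.det_permutation]
  congr 1
  ext i j
  rw [Matrix.of_apply, Perm.permMatrix_apply, Perm.permMatrix_apply,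
    ← σ.orderEmbOfFin_inducedPerm h (σ.card_eq_of_mem_iff h)]
  exact if_congr (B.orderEmbOfFin _).injective.eq_iff rfl rfl

theorem minorM_permMatrix_eq_zero (h : A.image σ ≠ B) : minorM (σ.permMatrix R) A B = 0 := by
  rw [minorM]
  split_ifs with hcard
  · obtain ⟨a, ha, haB⟩ : ∃ a ∈ A, σ a ∉ B := by
      by_contra! hsub
      refine h (eq_of_subset_of_card_le (image_subset_iff.2 hsub) ?_)
      rw [card_image_of_injective _ σ.injective, hcard]
    obtain ⟨i, rfl⟩ : ∃ i, A.orderEmbOfFin rfl i = a := by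
      simpa [← Set.mem_range, range_orderEmbOfFin] using ha
    refine Matrix.det_eq_zero_of_row_eq_zero i fun j => ?_
    rw [Matrix.of_apply, Perm.permMatrix_apply,
      if_neg fun hj : σ _ = _ => haB (hj ▸ B.orderEmbOfFin_mem _ j)]
  · rfl

end PermMatrix

/-- For the permutation matrix `X = (δ_{σ(i),j})`, the Laplace product is
`X{A|B} = sgn σ` if `σ(A) = B` and `0` otherwise. -/
theorem statement2 {n : ℕ} {R : Type*} [CommRing R] (σ : Equiv.Perm (Fin n))
    (X : Matrix (Fin n) (Fin n) R)
    (hX : ∀ i j, X i j = if σ i = j then 1 else 0)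
    (A B : Finset (Fin n)) :
    lap X A B = if A.image σ = B then ((Equiv.Perm.sign σ : ℤ) : R) else 0 := by
  obtain rfl : X = σ.permMatrix R := Matrix.ext fun i j => by rw [hX, Perm.permMatrix_apply]
  split_ifs with h
  · have hmem : ∀ x, x ∈ A ↔ σ x ∈ B := by simp [← h]
    rw [lap, minorM_permMatrix_of_mem_iff σ hmem,
      minorM_permMatrix_of_mem_iff σ (σ.mem_compl_iff_of_mem_iff hmem),
      σ.sign_eq_mul_sign_inducedPerm hmem]
    have hexp : ∑ i ∈ A, ((i : ℕ) + 1) + ∑ j ∈ B, ((j : ℕ) + 1) =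
        ∑ i ∈ A, (i : ℕ) + ∑ j ∈ B, (j : ℕ) + 2 * #A := by
      simp only [sum_add_distrib, sum_const, smul_eq_mul, mul_one, σ.card_eq_of_mem_iff hmem]
      ring
    rw [hexp, pow_add, pow_mul, neg_one_sq, one_pow, mul_one]
    push_cast
    ring
  · rw [lap, minorM_permMatrix_eq_zero σ h, zero_mul, mul_zero]
end

section
/- Let R be a commutative ring, let a₁,…,a_k ∈ R, and let (S₁,T₁),…,(S_k,T_k) be pairs of subsets of {1,…,n}. Let X be the generic n×n matrix whose entries are the indeterminates x_{ij} of the polynomial ring R[x_{ij} : 1 ≤ i,j ≤ n]. Then Σᵢ aᵢ·X{Sᵢ|Tᵢ} = 0 holds in R[x_{ij}] if and only if for every permutation σ of {1,…,n} one has Σ aᵢ = 0, the sum taken over those indices i with σ(Sᵢ) = Tᵢ. -/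
open Finset

namespace Stmt3

variable {n : ℕ}

/-- weight of a finset of `Fin n`: sum of values. -/
def wt (A : Finset (Fin n)) : ℕ := ∑ i ∈ A, (i : ℕ)

lemma card_compl_eq {p q : ℕ} {A : Finset (Fin n)} (hA : A.card = p) (hq : p + q = n) :
    Aᶜ.card = q := by
  have := Finset.card_add_card_compl A
  simp only [Fintype.card_fin] at this
  omega

/-- The equivalence `Fin p ⊕ Fin q ≃ Fin n` built from the order embeddings of `A` and `Aᶜ`. -/
noncomputable def embSum {p q : ℕ} (A : Finset (Fin n)) (hA : A.card = p) (hA' : Aᶜ.card = q) :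
    Fin p ⊕ Fin q ≃ Fin n :=
  Equiv.ofBijective (Sum.elim (A.orderEmbOfFin hA) (Aᶜ.orderEmbOfFin hA'))
    (by
      have hcard : p + q = n := by
        have := Finset.card_add_card_compl A
        simp only [Fintype.card_fin] at this
        omega
      rw [Fintype.bijective_iff_injective_and_card]
      constructor
      · intro x y hxy
        cases x with
        | inl x =>
          cases y with
          | inl y =>
            simp only [Sum.elim_inl] at hxy
            exact congrArg Sum.inl ((A.orderEmbOfFin hA).injective hxy)
          | inr y =>
            exfalso
            have h1 := A.orderEmbOfFin_mem hA x
            have h2 := Aᶜ.orderEmbOfFin_mem hA' y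
            simp only [Sum.elim_inl, Sum.elim_inr] at hxy
            rw [hxy] at h1
            exact (Finset.mem_compl.1 h2) h1
        | inr x =>
          cases y with
          | inl y =>
            exfalso
            have h1 := A.orderEmbOfFin_mem hA y
            have h2 := Aᶜ.orderEmbOfFin_mem hA' x
            simp only [Sum.elim_inl, Sum.elim_inr] at hxy
            rw [hxy] at h2
            exact (Finset.mem_compl.1 h2) h1
          | inr y =>
            simp only [Sum.elim_inr] at hxy
            exact congrArg Sum.inr ((Aᶜ.orderEmbOfFin hA').injective hxy)
      · simp [hcard])

@[simp] lemma embSum_inl {p q : ℕ} (A : Finset (Fin n)) (hA : A.card = p) (hA' : Aᶜ.card = q)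
    (i : Fin p) : embSum A hA hA' (Sum.inl i) = A.orderEmbOfFin hA i := rfl

@[simp] lemma embSum_inr {p q : ℕ} (A : Finset (Fin n)) (hA : A.card = p) (hA' : Aᶜ.card = q)
    (j : Fin q) : embSum A hA hA' (Sum.inr j) = Aᶜ.orderEmbOfFin hA' j := rfl

/-- swapping a "gap": the key order-embedding commutation. -/
lemma swap_comp_orderEmb {k : ℕ} {i i1 : Fin n} (h1 : (i1 : ℕ) = (i : ℕ) + 1)
    {C C' : Finset (Fin n)} (hiC : i ∉ C) (hi1C : i1 ∈ C)
    (hC' : C' = insert i (C.erase i1)) (hk : C.card = k) (hk' : C'.card = k) :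
    (fun x => Equiv.swap i i1 (C'.orderEmbOfFin hk' x)) = ⇑(C.orderEmbOfFin hk) := by
  have hii1 : i ≠ i1 := by
    intro e; rw [e] at h1; omega
  have hnotmem : i1 ∉ C' := by
    rw [hC']
    simp only [Finset.mem_insert, Finset.mem_erase]
    push_neg
    exact ⟨hii1.symm, fun h => absurd rfl h⟩
  apply Finset.orderEmbOfFin_unique
  · intro x
    show Equiv.swap i i1 (C'.orderEmbOfFin hk' x) ∈ C
    have hm : (C'.orderEmbOfFin hk') x ∈ insert i (C.erase i1) := by
      rw [← hC']; exact C'.orderEmbOfFin_mem hk' x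
    rcases Finset.mem_insert.1 hm with h | h
    · rw [h, Equiv.swap_apply_left]; exact hi1C
    · have hne1 : C'.orderEmbOfFin hk' x ≠ i1 := Finset.ne_of_mem_erase h
      have hne2 : C'.orderEmbOfFin hk' x ≠ i := by
        intro e
        exact hiC (e ▸ Finset.mem_of_mem_erase h)
      rw [Equiv.swap_apply_of_ne_of_ne hne2 hne1]
      exact Finset.mem_of_mem_erase h
  · intro x y hxy
    have hlt := (C'.orderEmbOfFin hk').strictMono hxy
    set u := C'.orderEmbOfFin hk' x with hu
    set v := C'.orderEmbOfFin hk' y with hv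
    have hu1 : u ≠ i1 := fun e => hnotmem (e ▸ C'.orderEmbOfFin_mem hk' x)
    have hv1 : v ≠ i1 := fun e => hnotmem (e ▸ C'.orderEmbOfFin_mem hk' y)
    show Equiv.swap i i1 u < Equiv.swap i i1 v
    rcases eq_or_ne u i with hui | hui
    · rw [hui, Equiv.swap_apply_left]
      have hvi : v ≠ i := by rintro rfl; exact absurd hlt (by simp [hui])
      rw [Equiv.swap_apply_of_ne_of_ne hvi hv1]
      have : (i : ℕ) < (v : ℕ) := by rw [← hui]; exact hlt
      have hv1' : (v : ℕ) ≠ (i : ℕ) + 1 := by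
        intro e; exact hv1 (Fin.ext (by omega))
      exact Fin.lt_def.2 (by omega)
    · rcases eq_or_ne v i with hvi | hvi
      · rw [hvi, Equiv.swap_apply_left, Equiv.swap_apply_of_ne_of_ne hui hu1]
        have : (u : ℕ) < (i : ℕ) := by rw [← hvi]; exact hlt
        exact Fin.lt_def.2 (by omega)
      · rw [Equiv.swap_apply_of_ne_of_ne hui hu1, Equiv.swap_apply_of_ne_of_ne hvi hv1]
        exact hlt


variable {n : ℕ}

noncomputable def DD {p : ℕ} (hp : p ≤ n) : Finset (Fin n) :=
  Finset.map (Fin.castLEEmb hp) Finset.univ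

lemma card_DD {p : ℕ} (hp : p ≤ n) : (DD hp).card = p := by simp [DD]

lemma mem_DD {p : ℕ} (hp : p ≤ n) (j : Fin n) : j ∈ DD hp ↔ (j : ℕ) < p := by
  simp only [DD, Finset.mem_map, Finset.mem_univ, true_and]
  constructor
  · rintro ⟨x, rfl⟩
    simpa using x.isLt
  · intro h
    exact ⟨⟨(j : ℕ), h⟩, by ext; simp [Fin.castLEEmb]⟩

lemma exists_gap {p : ℕ} (hp : p ≤ n) {A : Finset (Fin n)} (hA : A.card = p)
    (hne : A ≠ DD hp) : ∃ i i1 : Fin n, (i1 : ℕ) = (i : ℕ) + 1 ∧ i ∉ A ∧ i1 ∈ A := by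
  by_contra hcon
  push_neg at hcon
  have hdown : ∀ m : ℕ, ∀ j : Fin n, j ∈ A → (j : ℕ) = m → ∀ k : Fin n, (k : ℕ) ≤ m → k ∈ A := by
    intro m
    induction m using Nat.strong_induction_on with
    | _ m ih =>
      intro j hj hjm k hk
      rcases eq_or_lt_of_le hk with h | h
      · have : k = j := Fin.ext (by omega)
        exact this ▸ hj
      · have hm1 : 1 ≤ m := by omega
        have hj' : (⟨m - 1, by omega⟩ : Fin n) ∈ A := by
          by_contra hmem
          exact (hcon ⟨m - 1, by omega⟩ j (by simp; omega) hmem) hj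
        exact ih (m - 1) (by omega) _ hj' rfl k (by omega)
  have hsub : A ⊆ DD hp := by
    intro j hj
    rw [mem_DD]
    have hIic : Finset.Iic j ⊆ A := by
      intro k hk
      exact hdown (j : ℕ) j hj rfl k (Fin.le_def.1 (Finset.mem_Iic.1 hk))
    have := Finset.card_le_card hIic
    rw [Fin.card_Iic, hA] at this
    omega
  exact hne (Finset.eq_of_subset_of_card_le hsub (by rw [card_DD, hA]))


lemma sign_pi_D {p q : ℕ} (hp : p ≤ n) (hq : p + q = n) :
    ∀ (N : ℕ) (A : Finset (Fin n)) (hA : A.card = p), wt A = N →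
    Equiv.Perm.sign ((embSum (DD hp) (card_DD hp) (card_compl_eq (card_DD hp) hq)).symm.trans
      (embSum A hA (card_compl_eq hA hq))) = (-1) ^ (wt A + wt (DD hp)) := by
  intro N
  induction N using Nat.strong_induction_on with
  | _ N ih =>
    intro A hA hwt
    by_cases hAD : A = DD hp
    · subst hAD
      have he : (embSum (DD hp) (card_DD hp) (card_compl_eq (card_DD hp) hq)).symm.trans
          (embSum (DD hp) hA (card_compl_eq hA hq)) = Equiv.refl (Fin n) :=
        Equiv.symm_trans_self _
      rw [he]
      have : (-1 : ℤˣ) ^ (wt (DD hp) + wt (DD hp)) = 1 :=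
        Even.neg_one_pow ⟨wt (DD hp), rfl⟩
      rw [this]
      simp
    · obtain ⟨i, i1, h1, hiA, hi1A⟩ := exists_gap hp hA hAD
      set A' : Finset (Fin n) := insert i (A.erase i1) with hA'def
      have hiA' : i ∉ A.erase i1 := fun h => hiA (Finset.mem_of_mem_erase h)
      have hA' : A'.card = p := by
        rw [hA'def, Finset.card_insert_of_notMem hiA', Finset.card_erase_of_mem hi1A, hA]
        have : 1 ≤ p := by
          rw [← hA]; exact Finset.card_pos.2 ⟨i1, hi1A⟩
        omega
      have hwt' : wt A' + 1 = wt A := by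
        have e1 : wt A' = (i : ℕ) + wt (A.erase i1) := Finset.sum_insert hiA'
        have e2 : (i1 : ℕ) + wt (A.erase i1) = wt A :=
          Finset.add_sum_erase A (fun x : Fin n => (x : ℕ)) hi1A
        omega
      -- complement relation
      have hii1 : i ≠ i1 := by intro e; rw [e] at h1; omega
      have hcompl : Aᶜ = insert i (A'ᶜ.erase i1) := by
        ext t
        by_cases ht1 : t = i <;> by_cases ht2 : t = i1 <;>
          simp [hA'def, ht1, ht2, hii1, Ne.symm hii1, hiA, hi1A] <;> tauto
      have hiAc : i ∉ A'ᶜ := by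
        simp [hA'def]
      have hi1Ac : i1 ∈ A'ᶜ := by
        simp [hA'def, Ne.symm hii1, hii1]
      -- embSum relation
      have hswapA := swap_comp_orderEmb h1 hiA hi1A hA'def hA hA'
      have hswapC := swap_comp_orderEmb h1 hiAc hi1Ac hcompl
        (card_compl_eq hA' hq) (card_compl_eq hA hq)
      have hkey : embSum A hA (card_compl_eq hA hq) =
          (embSum A' hA' (card_compl_eq hA' hq)).trans (Equiv.swap i i1) := by
        apply Equiv.ext
        intro t
        cases t with
        | inl x =>
          have := congrFun hswapA x
          simp only [Equiv.trans_apply, embSum_inl]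
          exact this.symm
        | inr x =>
          have := congrFun hswapC x
          simp only [Equiv.trans_apply, embSum_inr]
          rw [← this, Equiv.swap_apply_self]
      rw [hkey]
      have hassoc : (embSum (DD hp) (card_DD hp) (card_compl_eq (card_DD hp) hq)).symm.trans
          ((embSum A' hA' (card_compl_eq hA' hq)).trans (Equiv.swap i i1)) =
          Equiv.swap i i1 * ((embSum (DD hp) (card_DD hp)
            (card_compl_eq (card_DD hp) hq)).symm.trans
            (embSum A' hA' (card_compl_eq hA' hq))) := rfl
      rw [hassoc, map_mul, Equiv.Perm.sign_swap hii1,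
        ih (wt A') (by omega) A' hA' rfl]
      have hexp : wt A + wt (DD hp) = (wt A' + wt (DD hp)) + 1 := by omega
      rw [hexp, pow_succ]
      exact (mul_comm _ _)

lemma sign_pi {p q : ℕ} (hq : p + q = n) (A B : Finset (Fin n))
    (hA : A.card = p) (hB : B.card = p) :
    Equiv.Perm.sign ((embSum B hB (card_compl_eq hB hq)).symm.trans
      (embSum A hA (card_compl_eq hA hq))) = (-1) ^ (wt A + wt B) := by
  have hp : p ≤ n := by omega
  set eA := embSum A hA (card_compl_eq hA hq) with heA
  set eB := embSum B hB (card_compl_eq hB hq) with heB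
  set eD := embSum (DD hp) (card_DD hp) (card_compl_eq (card_DD hp) hq) with heD
  have hsplit : eB.symm.trans eA = (eB.symm.trans eD).trans (eD.symm.trans eA) := by
    apply Equiv.ext; intro t
    simp [Equiv.trans_apply]
  have hmul : (eB.symm.trans eD).trans (eD.symm.trans eA) =
      (eD.symm.trans eA) * (eB.symm.trans eD) := rfl
  have hBD : eB.symm.trans eD = (eD.symm.trans eB)⁻¹ := by
    apply Equiv.ext; intro t
    rfl
  rw [hsplit, hmul, map_mul, hBD, map_inv,
    sign_pi_D hp hq (wt A) A hA rfl, sign_pi_D hp hq (wt B) B hB rfl]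
  have : ((-1 : ℤˣ) ^ (wt B + wt (DD hp)))⁻¹ = (-1) ^ (wt B + wt (DD hp)) := by
    simp
  rw [this, ← pow_add]
  have hexp : wt A + wt (DD hp) + (wt B + wt (DD hp)) = (wt A + wt B) + 2 * wt (DD hp) := by
    omega
  rw [hexp, pow_add, pow_mul]
  norm_num


noncomputable def permOf {p q : ℕ} (A B : Finset (Fin n)) (hA : A.card = p) (hA' : Aᶜ.card = q)
    (hB : B.card = p) (hB' : Bᶜ.card = q) (τ : Equiv.Perm (Fin p)) (ρ : Equiv.Perm (Fin q)) :
    Equiv.Perm (Fin n) :=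
  (embSum B hB hB').symm.trans ((Equiv.sumCongr τ ρ).trans (embSum A hA hA'))

lemma permOf_apply_emb {p q : ℕ} {A B : Finset (Fin n)} (hA : A.card = p) (hA' : Aᶜ.card = q)
    (hB : B.card = p) (hB' : Bᶜ.card = q) (τ : Equiv.Perm (Fin p)) (ρ : Equiv.Perm (Fin q))
    (s : Fin p ⊕ Fin q) :
    permOf A B hA hA' hB hB' τ ρ (embSum B hB hB' s) = embSum A hA hA' (Equiv.sumCongr τ ρ s) := by
  simp [permOf]

lemma sign_permOf {p q : ℕ} (hq : p + q = n) {A B : Finset (Fin n)} (hA : A.card = p)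
    (hA' : Aᶜ.card = q) (hB : B.card = p) (hB' : Bᶜ.card = q)
    (τ : Equiv.Perm (Fin p)) (ρ : Equiv.Perm (Fin q)) :
    Equiv.Perm.sign (permOf A B hA hA' hB hB' τ ρ) =
      Equiv.Perm.sign τ * Equiv.Perm.sign ρ * (-1) ^ (wt A + wt B) := by
  have hd : permOf A B hA hA' hB hB' τ ρ =
      (embSum A hA hA').permCongr (Equiv.sumCongr τ ρ) *
        ((embSum B hB hB').symm.trans (embSum A hA hA')) := by
    apply Equiv.ext; intro t
    simp [permOf, Equiv.permCongr_apply, Equiv.Perm.mul_apply]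
  have hπ : Equiv.Perm.sign ((embSum B hB hB').symm.trans (embSum A hA hA')) =
      (-1) ^ (wt A + wt B) := sign_pi hq A B hA hB
  rw [hd, map_mul, Equiv.Perm.sign_permCongr, Equiv.Perm.sign_sumCongr, hπ]

lemma permOf_image {p q : ℕ} {A B : Finset (Fin n)} (hA : A.card = p) (hA' : Aᶜ.card = q)
    (hB : B.card = p) (hB' : Bᶜ.card = q) (τ : Equiv.Perm (Fin p)) (ρ : Equiv.Perm (Fin q)) :
    B.image ⇑(permOf A B hA hA' hB hB' τ ρ) = A := by
  apply Finset.eq_of_subset_of_card_le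
  · intro t ht
    obtain ⟨u, hu, rfl⟩ := Finset.mem_image.1 ht
    obtain ⟨j, hj⟩ : ∃ j, B.orderEmbOfFin hB j = u :=
      ⟨(B.orderIsoOfFin hB).symm ⟨u, hu⟩, by
        rw [← Finset.coe_orderIsoOfFin_apply, OrderIso.apply_symm_apply]⟩
    rw [← hj]
    have h2 : permOf A B hA hA' hB hB' τ ρ (embSum B hB hB' (Sum.inl j)) ∈ A := by
      rw [permOf_apply_emb]
      simpa using A.orderEmbOfFin_mem hA (τ j)
    simpa using h2
  · rw [Finset.card_image_of_injective _ (permOf A B hA hA' hB hB' τ ρ).injective, hA, hB]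

lemma exists_permOf_eq {p q : ℕ} {A B : Finset (Fin n)} (hA : A.card = p) (hA' : Aᶜ.card = q)
    (hB : B.card = p) (hB' : Bᶜ.card = q) (σ : Equiv.Perm (Fin n)) (hσ : B.image ⇑σ = A) :
    ∃ τ ρ, permOf A B hA hA' hB hB' τ ρ = σ := by
  have hmemA : ∀ j : Fin p, σ (B.orderEmbOfFin hB j) ∈ A := fun j =>
    hσ ▸ Finset.mem_image_of_mem _ (B.orderEmbOfFin_mem hB j)
  have hmemC : ∀ j : Fin q, σ (Bᶜ.orderEmbOfFin hB' j) ∈ Aᶜ := by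
    intro j
    have hbj := Bᶜ.orderEmbOfFin_mem hB' j
    rw [Finset.mem_compl] at hbj ⊢
    intro hmem
    rw [← hσ] at hmem
    obtain ⟨u, hu, he⟩ := Finset.mem_image.1 hmem
    exact hbj (σ.injective he ▸ hu)
  set τ0 : Fin p → Fin p :=
    fun j => (A.orderIsoOfFin hA).symm ⟨σ (B.orderEmbOfFin hB j), hmemA j⟩ with hτ0
  set ρ0 : Fin q → Fin q :=
    fun j => (Aᶜ.orderIsoOfFin hA').symm ⟨σ (Bᶜ.orderEmbOfFin hB' j), hmemC j⟩ with hρ0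
  have hτa : ∀ j, A.orderEmbOfFin hA (τ0 j) = σ (B.orderEmbOfFin hB j) := by
    intro j
    rw [hτ0, ← Finset.coe_orderIsoOfFin_apply, OrderIso.apply_symm_apply]
  have hρa : ∀ j, Aᶜ.orderEmbOfFin hA' (ρ0 j) = σ (Bᶜ.orderEmbOfFin hB' j) := by
    intro j
    rw [hρ0, ← Finset.coe_orderIsoOfFin_apply, OrderIso.apply_symm_apply]
  have hτinj : Function.Injective τ0 := by
    intro x y hxy
    have h2 := congrArg (A.orderEmbOfFin hA) hxy
    rw [hτa, hτa] at h2
    exact (B.orderEmbOfFin hB).injective (σ.injective h2)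
  have hρinj : Function.Injective ρ0 := by
    intro x y hxy
    have h2 := congrArg (Aᶜ.orderEmbOfFin hA') hxy
    rw [hρa, hρa] at h2
    exact (Bᶜ.orderEmbOfFin hB').injective (σ.injective h2)
  refine ⟨Equiv.ofBijective τ0 (Finite.injective_iff_bijective.1 hτinj),
    Equiv.ofBijective ρ0 (Finite.injective_iff_bijective.1 hρinj), ?_⟩
  apply Equiv.ext
  intro t
  obtain ⟨s, rfl⟩ := (embSum B hB hB').surjective t
  rw [permOf_apply_emb]
  cases s with
  | inl j =>
    simp only [Equiv.sumCongr_apply, Sum.map_inl, embSum_inl, Equiv.ofBijective_apply]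
    exact hτa j
  | inr j =>
    simp only [Equiv.sumCongr_apply, Sum.map_inr, embSum_inr, Equiv.ofBijective_apply]
    exact hρa j

lemma lap_genX {R : Type*} [CommRing R] (A B : Finset (Fin n)) :
    lap (genX n n R) A B =
      ∑ σ ∈ Finset.univ.filter (fun σ : Equiv.Perm (Fin n) => B.image ⇑σ = A),
        ((Equiv.Perm.sign σ : ℤ) : MvPolynomial (Fin n × Fin n) R) *
          ∏ t, MvPolynomial.X (σ t, t) := by
  by_cases h : A.card = B.card
  · have hq : A.card + Aᶜ.card = n := by
      have := Finset.card_add_card_compl A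
      simpa using this
    have hB : B.card = A.card := h.symm
    have hB' : Bᶜ.card = Aᶜ.card := card_compl_eq hB hq
    have hcc : Aᶜ.card = Bᶜ.card := hB'.symm
    trans (∑ x : Equiv.Perm (Fin A.card) × Equiv.Perm (Fin Aᶜ.card),
      (-1 : MvPolynomial (Fin n × Fin n) R) ^
          (∑ i ∈ A, ((i : ℕ) + 1) + ∑ j ∈ B, ((j : ℕ) + 1)) *
        ((((Equiv.Perm.sign x.1 : ℤ) : MvPolynomial (Fin n × Fin n) R) *
            ∏ i, (Matrix.of fun i j : Fin A.card =>
              genX n n R (A.orderEmbOfFin rfl i) (B.orderEmbOfFin h.symm j)) (x.1 i) i) *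
         (((Equiv.Perm.sign x.2 : ℤ) : MvPolynomial (Fin n × Fin n) R) *
            ∏ i, (Matrix.of fun i j : Fin Aᶜ.card =>
              genX n n R (Aᶜ.orderEmbOfFin rfl i) (Bᶜ.orderEmbOfFin hcc.symm j)) (x.2 i) i)))
    · rw [lap, minorM, minorM, dif_pos h, dif_pos hcc, Matrix.det_apply', Matrix.det_apply',
        Finset.sum_mul_sum, Finset.mul_sum, Fintype.sum_prod_type]
      exact Finset.sum_congr rfl fun τ _ => Finset.mul_sum _ _ _
    · apply Finset.sum_bij (fun x _ => permOf A B rfl rfl hB hB' x.1 x.2)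
      · intro x _
        simp [permOf_image]
      · intro x1 _ x2 _ heq
        have hτ : x1.1 = x2.1 := by
          apply Equiv.ext
          intro j
          have h2 := congrArg (fun σ : Equiv.Perm (Fin n) =>
            σ (embSum B hB hB' (Sum.inl j))) heq
          simp only [permOf_apply_emb, Equiv.sumCongr_apply, Sum.map_inl] at h2
          exact Sum.inl_injective ((embSum A rfl rfl).injective h2)
        have hρ : x1.2 = x2.2 := by
          apply Equiv.ext
          intro j
          have h2 := congrArg (fun σ : Equiv.Perm (Fin n) =>
            σ (embSum B hB hB' (Sum.inr j))) heq
          simp only [permOf_apply_emb, Equiv.sumCongr_apply, Sum.map_inr] at h2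
          exact Sum.inr_injective ((embSum A rfl rfl).injective h2)
        exact Prod.ext hτ hρ
      · intro σ hσ
        rw [Finset.mem_filter] at hσ
        obtain ⟨τ, ρ, hτρ⟩ := exists_permOf_eq rfl rfl hB hB' σ hσ.2
        exact ⟨(τ, ρ), Finset.mem_univ _, hτρ⟩
      · rintro ⟨τ, ρ⟩ _
        set σx := permOf A B rfl rfl hB hB' τ ρ with hσx
        have hprod : (∏ t, MvPolynomial.X (σx t, t) : MvPolynomial (Fin n × Fin n) R) =
            (∏ i, MvPolynomial.X (A.orderEmbOfFin rfl (τ i), B.orderEmbOfFin hB i)) *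
            (∏ i, MvPolynomial.X (Aᶜ.orderEmbOfFin rfl (ρ i), Bᶜ.orderEmbOfFin hB' i)) := by
          rw [← Equiv.prod_comp (embSum B hB hB')
            (fun t => (MvPolynomial.X (σx t, t) : MvPolynomial (Fin n × Fin n) R)),
            Fintype.prod_sum_type]
          congr 1
          · apply Finset.prod_congr rfl
            intro i _
            rw [hσx, permOf_apply_emb]
            simp
          · apply Finset.prod_congr rfl
            intro i _
            rw [hσx, permOf_apply_emb]
            simp
        have hsgn : ((Equiv.Perm.sign σx : ℤ) : MvPolynomial (Fin n × Fin n) R) =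
            ((Equiv.Perm.sign τ : ℤ) : MvPolynomial (Fin n × Fin n) R) *
            ((Equiv.Perm.sign ρ : ℤ) : MvPolynomial (Fin n × Fin n) R) *
            (-1) ^ (wt A + wt B) := by
          rw [hσx, sign_permOf hq rfl rfl hB hB' τ ρ]
          push_cast
          ring
        have hE : ((-1 : MvPolynomial (Fin n × Fin n) R) ^
            (∑ i ∈ A, ((i : ℕ) + 1) + ∑ j ∈ B, ((j : ℕ) + 1))) =
            (-1) ^ (wt A + wt B) := by
          have hE' : (∑ i ∈ A, ((i : ℕ) + 1) + ∑ j ∈ B, ((j : ℕ) + 1)) =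
              (wt A + wt B) + 2 * A.card := by
            rw [Finset.sum_add_distrib, Finset.sum_add_distrib]
            simp only [Finset.sum_const, smul_eq_mul, mul_one, wt, hB]
            omega
          rw [hE', pow_add, pow_mul, neg_one_sq, one_pow, mul_one]
        rw [hprod, hsgn, hE]
        simp only [Matrix.of_apply, genX, Matrix.of_apply]
        ring
  · have hfilt : Finset.univ.filter (fun σ : Equiv.Perm (Fin n) => B.image ⇑σ = A) = ∅ := by
      rw [Finset.filter_eq_empty_iff]
      intro σ _
      intro hσ
      exact h (by rw [← hσ, Finset.card_image_of_injective _ σ.injective])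
    rw [hfilt, Finset.sum_empty, lap, minorM, dif_neg h, zero_mul, mul_zero]
noncomputable def dmon (σ : Equiv.Perm (Fin n)) : (Fin n × Fin n) →₀ ℕ :=
  ∑ t : Fin n, Finsupp.single (σ t, t) 1

lemma dmon_apply (σ : Equiv.Perm (Fin n)) (i j : Fin n) :
    dmon σ (i, j) = if σ j = i then 1 else 0 := by
  rw [dmon, Finsupp.finset_sum_apply, Finset.sum_eq_single j]
  · rw [Finsupp.single_apply]
    by_cases h : σ j = i
    · simp [h]
    · simp only [Prod.mk.injEq]
      rw [if_neg (by tauto), if_neg h]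
  · intro b _ hb
    rw [Finsupp.single_apply, if_neg (by simp [Prod.ext_iff]; tauto)]
  · intro habs
    exact absurd (Finset.mem_univ j) habs

lemma dmon_inj : Function.Injective (dmon (n := n)) := by
  intro σ σ' h
  apply Equiv.ext
  intro j
  have h1 := congrArg (fun f : (Fin n × Fin n) →₀ ℕ => f (σ j, j)) h
  simp only [dmon_apply] at h1
  rw [if_pos trivial] at h1
  by_cases h2 : σ' j = σ j
  · exact h2.symm
  · rw [if_neg h2] at h1
    exact absurd h1 one_ne_zero

lemma prod_X_sum_single {R : Type*} [CommRing R] {ι : Type*} (s : Finset ι)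
    (f : ι → Fin n × Fin n) :
    (∏ t ∈ s, MvPolynomial.X (f t) : MvPolynomial (Fin n × Fin n) R) =
      MvPolynomial.monomial (∑ t ∈ s, Finsupp.single (f t) 1) 1 := by
  induction s using Finset.cons_induction with
  | empty => simp
  | cons a s ha ih =>
    rw [Finset.prod_cons, Finset.sum_cons, ih,
      ← pow_one (MvPolynomial.X (f a) : MvPolynomial (Fin n × Fin n) R),
      MvPolynomial.X_pow_eq_monomial, MvPolynomial.monomial_mul, one_mul]

lemma prod_X_eq_monomial {R : Type*} [CommRing R] (σ : Equiv.Perm (Fin n)) :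
    (∏ t, MvPolynomial.X (σ t, t) : MvPolynomial (Fin n × Fin n) R) =
      MvPolynomial.monomial (dmon σ) 1 :=
  prod_X_sum_single Finset.univ fun t => (σ t, t)

lemma image_eq_iff_image_inv_eq (σ : Equiv.Perm (Fin n)) (U V : Finset (Fin n)) :
    U.image ⇑σ = V ↔ V.image ⇑σ⁻¹ = U := by
  constructor
  · rintro rfl
    rw [Finset.image_image]
    refine Finset.image_congr (fun x _ => ?_) |>.trans (Finset.image_id)
    simp
  · rintro rfl
    rw [Finset.image_image]
    refine Finset.image_congr (fun x _ => ?_) |>.trans (Finset.image_id)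
    simp

end Stmt3

open Stmt3


/-- A linear relation `Σᵢ aᵢ X{Sᵢ|Tᵢ} = 0` with constant coefficients holds for the
generic matrix if and only if, for each permutation `σ`, the sum of the `aᵢ` over those
`i` with `σ(Sᵢ) = Tᵢ` vanishes. -/
theorem statement3 {n k : ℕ} {R : Type*} [CommRing R] (a : Fin k → R)
    (S T : Fin k → Finset (Fin n)) :
    (∑ i, MvPolynomial.C (a i) * lap (genX n n R) (S i) (T i) = 0) ↔
      ∀ σ : Equiv.Perm (Fin n),
        ∑ i ∈ Finset.univ.filter (fun i => (S i).image σ = T i), a i = 0 := by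
  classical
  have key : (∑ i, MvPolynomial.C (a i) * lap (genX n n R) (S i) (T i)) =
      ∑ σ : Equiv.Perm (Fin n), MvPolynomial.monomial (dmon σ)
        (((Equiv.Perm.sign σ : ℤ) : R) *
          ∑ i ∈ Finset.univ.filter (fun i => (T i).image ⇑σ = S i), a i) := by
    have step1 : ∀ i : Fin k, MvPolynomial.C (a i) * lap (genX n n R) (S i) (T i) =
        ∑ σ : Equiv.Perm (Fin n), (if (T i).image ⇑σ = S i then
          MvPolynomial.monomial (dmon σ) (((Equiv.Perm.sign σ : ℤ) : R) * a i) else 0) := by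
      intro i
      rw [lap_genX (S i) (T i), Finset.mul_sum, Finset.sum_filter]
      apply Finset.sum_congr rfl
      intro σ _
      by_cases hc : (T i).image ⇑σ = S i
      · rw [if_pos hc, if_pos hc, prod_X_eq_monomial,
          show ((Equiv.Perm.sign σ : ℤ) : MvPolynomial (Fin n × Fin n) R) =
            MvPolynomial.C (((Equiv.Perm.sign σ : ℤ) : R)) from
              (map_intCast (MvPolynomial.C : R →+* MvPolynomial (Fin n × Fin n) R) _).symm,
          MvPolynomial.C_mul_monomial, MvPolynomial.C_mul_monomial]
        congr 1
        ring
      · rw [if_neg hc, if_neg hc]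
    calc (∑ i, MvPolynomial.C (a i) * lap (genX n n R) (S i) (T i))
        = ∑ i, ∑ σ : Equiv.Perm (Fin n), (if (T i).image ⇑σ = S i then
            MvPolynomial.monomial (dmon σ) (((Equiv.Perm.sign σ : ℤ) : R) * a i) else 0) :=
          Finset.sum_congr rfl fun i _ => step1 i
      _ = ∑ σ : Equiv.Perm (Fin n), ∑ i, (if (T i).image ⇑σ = S i then
            MvPolynomial.monomial (dmon σ) (((Equiv.Perm.sign σ : ℤ) : R) * a i) else 0) :=
          Finset.sum_comm
      _ = ∑ σ : Equiv.Perm (Fin n), MvPolynomial.monomial (dmon σ)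
            (((Equiv.Perm.sign σ : ℤ) : R) *
              ∑ i ∈ Finset.univ.filter (fun i => (T i).image ⇑σ = S i), a i) := by
          apply Finset.sum_congr rfl
          intro σ _
          rw [← Finset.sum_filter, Finset.mul_sum, map_sum]
  rw [key]
  constructor
  · intro h0 σ
    have hcoef := congrArg (MvPolynomial.coeff (dmon σ⁻¹)) h0
    rw [MvPolynomial.coeff_sum] at hcoef
    simp only [MvPolynomial.coeff_monomial, MvPolynomial.coeff_zero] at hcoef
    have hsel : ∀ σ' : Equiv.Perm (Fin n),
        (if dmon σ' = dmon σ⁻¹ then (((Equiv.Perm.sign σ' : ℤ) : R) *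
          ∑ i ∈ Finset.univ.filter (fun i => (T i).image ⇑σ' = S i), a i) else 0) =
        (if σ' = σ⁻¹ then (((Equiv.Perm.sign σ' : ℤ) : R) *
          ∑ i ∈ Finset.univ.filter (fun i => (T i).image ⇑σ' = S i), a i) else 0) := by
      intro σ'
      by_cases hd : σ' = σ⁻¹
      · rw [if_pos (by rw [hd]), if_pos hd]
      · rw [if_neg (fun hh => hd (dmon_inj hh)), if_neg hd]
    rw [Finset.sum_congr rfl (fun σ' _ => hsel σ'), Finset.sum_ite_eq',
      if_pos (Finset.mem_univ _)] at hcoef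
    have hfilt : Finset.univ.filter (fun i => (T i).image ⇑σ⁻¹ = S i) =
        Finset.univ.filter (fun i => (S i).image ⇑σ = T i) := by
      apply Finset.filter_congr
      intro i _
      rw [image_eq_iff_image_inv_eq σ⁻¹ (T i) (S i), inv_inv]
    rw [hfilt] at hcoef
    rcases Int.units_eq_one_or (Equiv.Perm.sign σ⁻¹) with hs | hs <;>
      rw [hs] at hcoef <;> simpa using hcoef
  · intro h0
    apply Finset.sum_eq_zero
    intro σ _
    have hfilt : Finset.univ.filter (fun i => (T i).image ⇑σ = S i) =
        Finset.univ.filter (fun i => (S i).image ⇑σ⁻¹ = T i) := by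
      apply Finset.filter_congr
      intro i _
      exact image_eq_iff_image_inv_eq σ (T i) (S i)
    rw [hfilt, h0 σ⁻¹, mul_zero, map_zero]
end

section
/- Let X be an n×n matrix over a commutative ring and let A, B ⊆ {1,…,n}. Then the generalized Laplace expansion holds: det X = Σ_{S ⊆ {1,…,n}, |S| = |B|} X{S|B} = Σ_{T ⊆ {1,…,n}, |T| = |A|} X{A|T}. -/
open Finset Equiv

section Aux
variable {n : ℕ} {R : Type*} [CommRing R]

/-- cast helper for determinants over `Fin` of equal sizes -/
lemma det_cast_aux {a b : ℕ} (h : a = b) (M : Matrix (Fin a) (Fin a) R)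
    (N : Matrix (Fin b) (Fin b) R)
    (hMN : ∀ i j, M i j = N (Fin.cast h i) (Fin.cast h j)) : M.det = N.det := by
  subst h
  congr 1
  ext i j
  exact hMN i j

lemma orderEmbOfFin_cast {α : Type*} [LinearOrder α] (s : Finset α) {a b : ℕ}
    (e : a = b) (h : s.card = b) (h' : s.card = a) (i : Fin a) :
    s.orderEmbOfFin h (Fin.cast e i) = s.orderEmbOfFin h' i := by
  subst e
  rfl

/-- The equivalence `Fin k ⊕ Fin m ≃ Fin n` built from a set `S` with `S.card = k`,
`Sᶜ.card = m`. -/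
noncomputable def sumEquiv (S : Finset (Fin n)) {k m : ℕ} (h1 : S.card = k)
    (h2 : Sᶜ.card = m) : Fin k ⊕ Fin m ≃ Fin n :=
  Equiv.ofBijective (Sum.elim (S.orderEmbOfFin h1) (Sᶜ.orderEmbOfFin h2)) (by
    constructor
    · rintro (i | i) (j | j) hij
      · simpa using (S.orderEmbOfFin h1).injective (by simpa using hij)
      · exact absurd (congrArg (· ∈ S) hij)
          (by simp [S.orderEmbOfFin_mem h1, (mem_compl.1 (Sᶜ.orderEmbOfFin_mem h2 j))])
      · exact absurd (congrArg (· ∈ S) hij)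
          (by simp [S.orderEmbOfFin_mem h1, (mem_compl.1 (Sᶜ.orderEmbOfFin_mem h2 i))])
      · simpa using (Sᶜ.orderEmbOfFin h2).injective (by simpa using hij)
    · intro x
      by_cases hx : x ∈ S
      · have : x ∈ Set.range (S.orderEmbOfFin h1) := by
          rw [S.range_orderEmbOfFin h1]; exact hx
        obtain ⟨i, hi⟩ := this
        exact ⟨Sum.inl i, hi⟩
      · have : x ∈ Set.range (Sᶜ.orderEmbOfFin h2) := by
          rw [Sᶜ.range_orderEmbOfFin h2]; simpa using hx
        obtain ⟨i, hi⟩ := this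
        exact ⟨Sum.inr i, hi⟩)

@[simp] lemma sumEquiv_inl (S : Finset (Fin n)) {k m : ℕ} (h1 : S.card = k)
    (h2 : Sᶜ.card = m) (i : Fin k) : sumEquiv S h1 h2 (Sum.inl i) = S.orderEmbOfFin h1 i := rfl

@[simp] lemma sumEquiv_inr (S : Finset (Fin n)) {k m : ℕ} (h1 : S.card = k)
    (h2 : Sᶜ.card = m) (i : Fin m) : sumEquiv S h1 h2 (Sum.inr i) = Sᶜ.orderEmbOfFin h2 i := rfl

end Aux
open Finset Equiv
variable {n : ℕ}

lemma swap_val' (i j x : Fin n) : ((Equiv.swap i j x : Fin n) : ℕ) =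
    if (x:ℕ) = (i:ℕ) then (j:ℕ) else if (x:ℕ) = (j:ℕ) then (i:ℕ) else (x:ℕ) := by
  rcases eq_or_ne x i with rfl | hxi
  · simp [Equiv.swap_apply_left]
  · have hxi' : (x:ℕ) ≠ (i:ℕ) := fun h => hxi (Fin.ext h)
    rcases eq_or_ne x j with rfl | hxj
    · simp [Equiv.swap_apply_right, hxi']
    · have hxj' : (x:ℕ) ≠ (j:ℕ) := fun h => hxj (Fin.ext h)
      simp [Equiv.swap_apply_of_ne_of_ne hxi hxj, hxi', hxj']

section StepSetup
variable {S : Finset (Fin n)} {i j : Fin n}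

lemma step_card (hi : i ∉ S) (hj : j ∈ S) : (insert i (S.erase j)).card = S.card := by
  rw [Finset.card_insert_of_notMem (by simp [hi]), Finset.card_erase_of_mem hj]
  have := Finset.card_pos.2 ⟨j, hj⟩
  omega

lemma step_sum (hij : (j:ℕ) = (i:ℕ) + 1) (hi : i ∉ S) (hj : j ∈ S) :
    (∑ x ∈ insert i (S.erase j), (x:ℕ)) + 1 = ∑ x ∈ S, (x:ℕ) := by
  rw [Finset.sum_insert (by simp [hi])]
  have h : (j:ℕ) + ∑ x ∈ S.erase j, (x:ℕ) = ∑ x ∈ S, (x:ℕ) :=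
    Finset.add_sum_erase S (fun x => (x:ℕ)) hj
  omega

lemma step_compl (hij : (j:ℕ) = (i:ℕ) + 1) (hi : i ∉ S) (hj : j ∈ S) :
    (insert i (S.erase j))ᶜ = insert j (Sᶜ.erase i) := by
  have hne : i ≠ j := fun h => by rw [h] at hij; omega
  ext x
  by_cases hxj : x = j <;> by_cases hxi : x = i <;>
    simp_all [Finset.mem_insert, Finset.mem_erase, Finset.mem_compl]

lemma step_emb (hij : (j:ℕ) = (i:ℕ) + 1) (hi : i ∉ S) (hj : j ∈ S)
    {k : ℕ} (h1 : S.card = k) (h1' : (insert i (S.erase j)).card = k) (ν : Fin k) :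
    (insert i (S.erase j)).orderEmbOfFin h1' ν = Equiv.swap i j (S.orderEmbOfFin h1 ν) := by
  have key := Finset.orderEmbOfFin_unique h1'
    (f := fun ν => Equiv.swap i j (S.orderEmbOfFin h1 ν)) ?_ ?_
  · exact (congrFun key ν).symm
  · intro ν
    show Equiv.swap i j (S.orderEmbOfFin h1 ν) ∈ insert i (S.erase j)
    have hmem := S.orderEmbOfFin_mem h1 ν
    by_cases hx : S.orderEmbOfFin h1 ν = j
    · rw [hx, Equiv.swap_apply_right]; exact Finset.mem_insert_self _ _
    · rw [Equiv.swap_apply_of_ne_of_ne (fun h => hi (by rw [← h]; exact hmem)) hx]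
      exact Finset.mem_insert_of_mem (Finset.mem_erase.2 ⟨hx, hmem⟩)
  · intro a b hab
    show Equiv.swap i j (S.orderEmbOfFin h1 a) < Equiv.swap i j (S.orderEmbOfFin h1 b)
    have ha := S.orderEmbOfFin_mem h1 a
    have hb := S.orderEmbOfFin_mem h1 b
    have hlt : ((S.orderEmbOfFin h1 a : Fin n) : ℕ) < ((S.orderEmbOfFin h1 b : Fin n) : ℕ) :=
      (S.orderEmbOfFin h1).strictMono hab
    have hai : ((S.orderEmbOfFin h1 a : Fin n) : ℕ) ≠ (i:ℕ) :=
      fun h => hi (Fin.ext h ▸ ha)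
    have hbi : ((S.orderEmbOfFin h1 b : Fin n) : ℕ) ≠ (i:ℕ) :=
      fun h => hi (Fin.ext h ▸ hb)
    rw [Fin.lt_def, swap_val', swap_val']
    split_ifs <;> omega

lemma step_emb_compl (hij : (j:ℕ) = (i:ℕ) + 1) (hi : i ∉ S) (hj : j ∈ S)
    {m : ℕ} (h2 : Sᶜ.card = m) (h2' : (insert i (S.erase j))ᶜ.card = m) (ν : Fin m) :
    (insert i (S.erase j))ᶜ.orderEmbOfFin h2' ν = Equiv.swap i j (Sᶜ.orderEmbOfFin h2 ν) := by
  have hcompl := step_compl hij hi hj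
  have key := Finset.orderEmbOfFin_unique h2'
    (f := fun ν => Equiv.swap i j (Sᶜ.orderEmbOfFin h2 ν)) ?_ ?_
  · exact (congrFun key ν).symm
  · intro ν
    show Equiv.swap i j (Sᶜ.orderEmbOfFin h2 ν) ∈ (insert i (S.erase j))ᶜ
    have hmem := Sᶜ.orderEmbOfFin_mem h2 ν
    rw [hcompl]
    by_cases hx : Sᶜ.orderEmbOfFin h2 ν = i
    · rw [hx, Equiv.swap_apply_left]; exact Finset.mem_insert_self _ _
    · have hxj : Sᶜ.orderEmbOfFin h2 ν ≠ j := fun h => (Finset.mem_compl.1 (h ▸ hmem)) hj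
      rw [Equiv.swap_apply_of_ne_of_ne hx hxj]
      exact Finset.mem_insert_of_mem (Finset.mem_erase.2 ⟨hx, hmem⟩)
  · intro a b hab
    show Equiv.swap i j (Sᶜ.orderEmbOfFin h2 a) < Equiv.swap i j (Sᶜ.orderEmbOfFin h2 b)
    have ha := Finset.mem_compl.1 (Sᶜ.orderEmbOfFin_mem h2 a)
    have hb := Finset.mem_compl.1 (Sᶜ.orderEmbOfFin_mem h2 b)
    have hlt : ((Sᶜ.orderEmbOfFin h2 a : Fin n) : ℕ) < ((Sᶜ.orderEmbOfFin h2 b : Fin n) : ℕ) :=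
      (Sᶜ.orderEmbOfFin h2).strictMono hab
    have haj : ((Sᶜ.orderEmbOfFin h2 a : Fin n) : ℕ) ≠ (j:ℕ) :=
      fun h => ha (Fin.ext h ▸ hj)
    have hbj : ((Sᶜ.orderEmbOfFin h2 b : Fin n) : ℕ) ≠ (j:ℕ) :=
      fun h => hb (Fin.ext h ▸ hj)
    rw [Fin.lt_def, swap_val', swap_val']
    split_ifs <;> omega

end StepSetup

section Sign
variable {n : ℕ}

lemma downward_iff (S : Finset (Fin n))
    (h : ¬ ∃ i j : Fin n, (j:ℕ) = (i:ℕ) + 1 ∧ i ∉ S ∧ j ∈ S) (x : Fin n) :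
    x ∈ S ↔ (x:ℕ) < S.card := by
  push_neg at h
  have hstep : ∀ i j : Fin n, (j:ℕ) = (i:ℕ) + 1 → j ∈ S → i ∈ S := by
    intro i j hij hjS
    by_contra hi
    exact h i j hij hi hjS
  have hdc : ∀ d : ℕ, ∀ x : Fin n, x ∈ S → ∀ y : Fin n, (y:ℕ) + d = (x:ℕ) → y ∈ S := by
    intro d
    induction d with
    | zero => intro x hx y hy; have : y = x := Fin.ext (by omega); rwa [this]
    | succ d IH =>
      intro x hx y hy
      have hz : (y:ℕ) + 1 < n := by have := x.isLt; omega
      have hzS : (⟨(y:ℕ) + 1, hz⟩ : Fin n) ∈ S := IH x hx _ (by simp; omega)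
      exact hstep y ⟨(y:ℕ)+1, hz⟩ rfl hzS
  have hdc' : ∀ x ∈ S, ∀ y : Fin n, y ≤ x → y ∈ S := by
    intro x hx y hy
    exact hdc ((x:ℕ) - (y:ℕ)) x hx y (by have := Fin.le_def.1 hy; omega)
  constructor
  · intro hx
    have hsub : Finset.Iic x ⊆ S := fun y hy => hdc' x hx y (Finset.mem_Iic.1 hy)
    have := Finset.card_le_card hsub
    rw [Fin.card_Iic] at this
    omega
  · intro hx
    by_contra hxS
    have hsub : S ⊆ Finset.Iio x := by
      intro s hs
      rw [Finset.mem_Iio]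
      by_contra hlt
      exact hxS (hdc' s hs x (le_of_not_gt hlt))
    have := Finset.card_le_card hsub
    rw [Fin.card_Iio] at this
    omega

lemma sign_sumEquiv : ∀ (N : ℕ) (S B : Finset (Fin n)) {k m : ℕ} (h1 : S.card = k)
    (h2 : Sᶜ.card = m) (g1 : B.card = k) (g2 : Bᶜ.card = m),
    (∑ x ∈ S, (x:ℕ)) + (∑ x ∈ B, (x:ℕ)) = N →
    Equiv.Perm.sign ((sumEquiv B g1 g2).symm.trans (sumEquiv S h1 h2)) = (-1) ^ N := by
  intro N
  induction N using Nat.strong_induction_on with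
  | _ N IH =>
  intro S B k m h1 h2 g1 g2 hN
  by_cases hS : ∃ i j : Fin n, (j:ℕ) = (i:ℕ) + 1 ∧ i ∉ S ∧ j ∈ S
  · obtain ⟨i, j, hij, hi, hj⟩ := hS
    have hne : i ≠ j := fun h => by rw [h] at hij; omega
    have hc1 : (insert i (S.erase j)).card = k := by rw [step_card hi hj]; exact h1
    have hc2 : (insert i (S.erase j))ᶜ.card = m := by
      rw [Finset.card_compl, step_card hi hj, ← Finset.card_compl]; exact h2
    have hEq : sumEquiv (insert i (S.erase j)) hc1 hc2
        = (sumEquiv S h1 h2).trans (Equiv.swap i j) := by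
      apply Equiv.ext
      rintro (ν | ν)
      · simpa using step_emb hij hi hj h1 hc1 ν
      · simpa using step_emb_compl hij hi hj h2 hc2 ν
    have hsum : (∑ x ∈ insert i (S.erase j), (x:ℕ)) + (∑ x ∈ B, (x:ℕ)) = N - 1 := by
      have := step_sum hij hi hj
      omega
    have hN1 : 1 ≤ N := by
      have := step_sum hij hi hj
      omega
    have hsign := IH (N-1) (by omega) (insert i (S.erase j)) B hc1 hc2 g1 g2 hsum
    rw [hEq, ← Equiv.trans_assoc] at hsign
    have hmul : ((sumEquiv B g1 g2).symm.trans (sumEquiv S h1 h2)).trans (Equiv.swap i j)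
        = (Equiv.swap i j) * ((sumEquiv B g1 g2).symm.trans (sumEquiv S h1 h2)) := rfl
    rw [hmul, map_mul, Equiv.Perm.sign_swap hne] at hsign
    have : (-1 : ℤˣ) * (-1) ^ (N-1) = (-1) ^ N := by
      rw [← pow_succ']
      congr 1
      omega
    have hX := congrArg (fun z : ℤˣ => (-1) * z) hsign
    simp only [← mul_assoc, neg_mul, one_mul, neg_neg] at hX
    rw [hX, ← this]
    simp
  · by_cases hB : ∃ i j : Fin n, (j:ℕ) = (i:ℕ) + 1 ∧ i ∉ B ∧ j ∈ B
    · obtain ⟨i, j, hij, hi, hj⟩ := hB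
      have hne : i ≠ j := fun h => by rw [h] at hij; omega
      have hc1 : (insert i (B.erase j)).card = k := by rw [step_card hi hj]; exact g1
      have hc2 : (insert i (B.erase j))ᶜ.card = m := by
        rw [Finset.card_compl, step_card hi hj, ← Finset.card_compl]; exact g2
      have hEq : sumEquiv (insert i (B.erase j)) hc1 hc2
          = (sumEquiv B g1 g2).trans (Equiv.swap i j) := by
        apply Equiv.ext
        rintro (ν | ν)
        · simpa using step_emb hij hi hj g1 hc1 ν
        · simpa using step_emb_compl hij hi hj g2 hc2 ν
      have hsum : (∑ x ∈ S, (x:ℕ)) + (∑ x ∈ insert i (B.erase j), (x:ℕ)) = N - 1 := by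
        have := step_sum hij hi hj
        omega
      have hN1 : 1 ≤ N := by
        have := step_sum hij hi hj
        omega
      have hsign := IH (N-1) (by omega) S (insert i (B.erase j)) h1 h2 hc1 hc2 hsum
      have hsymm : (sumEquiv (insert i (B.erase j)) hc1 hc2).symm.trans (sumEquiv S h1 h2)
          = ((sumEquiv B g1 g2).symm.trans (sumEquiv S h1 h2)) * (Equiv.swap i j) := by
        rw [hEq]
        rfl
      rw [hsymm, map_mul, Equiv.Perm.sign_swap hne] at hsign
      have hgoal : (-1 : ℤˣ) ^ (N - 1) * (-1) = (-1) ^ N := by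
        rw [← pow_succ]
        congr 1
        omega
      rw [← hgoal, ← hsign]
      simp [mul_comm]
    · have hSB : S = B := by
        ext x
        rw [downward_iff S hS x, downward_iff B hB x, h1, g1]
      subst hSB
      have : sumEquiv S g1 g2 = sumEquiv S h1 h2 := rfl
      rw [this, Equiv.symm_trans_self]
      have heven : Even N := ⟨∑ x ∈ S, (x:ℕ), by omega⟩
      rw [heven.neg_one_pow]
      simp

end Sign

section Fiber
open Matrix
variable {n : ℕ} {R : Type*} [CommRing R]

lemma lap_fiber (X : Matrix (Fin n) (Fin n) R) (B S : Finset (Fin n)) (hS : S.card = B.card) :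
    ∑ σ ∈ Finset.univ.filter (fun σ : Equiv.Perm (Fin n) => B.image σ = S),
      ((Equiv.Perm.sign σ : ℤ) : R) * ∏ i, X (σ i) i = lap X S B := by
  classical
  have hSc : Sᶜ.card = Bᶜ.card := by
    rw [Finset.card_compl, Finset.card_compl, hS]
  -- the two equivalences
  have happly : ∀ (p : Equiv.Perm (Fin B.card) × Equiv.Perm (Fin Bᶜ.card))
      (u : Fin B.card ⊕ Fin Bᶜ.card),
      ((sumEquiv B rfl rfl).symm.trans ((Equiv.sumCongr p.1 p.2).trans (sumEquiv S hS hSc)))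
        ((sumEquiv B rfl rfl) u) = (sumEquiv S hS hSc) ((Equiv.sumCongr p.1 p.2) u) := by
    intro p u
    simp [Equiv.trans_apply, Equiv.symm_apply_apply]
  have key : (∑ p : Equiv.Perm (Fin B.card) × Equiv.Perm (Fin Bᶜ.card),
      ((Equiv.Perm.sign ((sumEquiv B rfl rfl).symm.trans
        ((Equiv.sumCongr p.1 p.2).trans (sumEquiv S hS hSc))) : ℤ) : R) *
      ∏ i, X (((sumEquiv B rfl rfl).symm.trans
        ((Equiv.sumCongr p.1 p.2).trans (sumEquiv S hS hSc))) i) i)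
      = ∑ σ ∈ Finset.univ.filter (fun σ : Equiv.Perm (Fin n) => B.image σ = S),
        ((Equiv.Perm.sign σ : ℤ) : R) * ∏ i, X (σ i) i := by
    apply Finset.sum_bij (fun p _ => (sumEquiv B rfl rfl).symm.trans
      ((Equiv.sumCongr p.1 p.2).trans (sumEquiv S hS hSc)))
    · intro p _
      rw [Finset.mem_filter]
      refine ⟨Finset.mem_univ _, ?_⟩
      apply Finset.eq_of_subset_of_card_le
      · intro x hx
        obtain ⟨b, hb, rfl⟩ := Finset.mem_image.1 hx
        have hb' : b ∈ Set.range (B.orderEmbOfFin rfl) := by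
          rw [Finset.range_orderEmbOfFin]; exact hb
        obtain ⟨ν, hν⟩ := hb'
        have : b = (sumEquiv B rfl rfl) (Sum.inl ν) := hν.symm
        rw [this, happly]
        exact S.orderEmbOfFin_mem hS _
      · rw [Finset.card_image_of_injective _
          ((sumEquiv B rfl rfl).symm.trans
            ((Equiv.sumCongr _ _).trans (sumEquiv S hS hSc))).injective]
        exact le_of_eq hS
    · intro p _ q _ h
      have h' : ∀ u, (Equiv.sumCongr p.1 p.2) u = (Equiv.sumCongr q.1 q.2) u := by
        intro u
        apply (sumEquiv S hS hSc).injective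
        rw [← happly p u, ← happly q u, h]
      ext ν
      · exact congrArg Fin.val (by simpa using h' (Sum.inl ν))
      · exact congrArg Fin.val (by simpa using h' (Sum.inr ν))
    · intro σ hσ
      have himg : B.image σ = S := (Finset.mem_filter.1 hσ).2
      have hmaps : Set.MapsTo ((((sumEquiv B rfl rfl)).trans σ).trans (sumEquiv S hS hSc).symm)
          (Set.range Sum.inl) (Set.range Sum.inl) := by
        rintro u ⟨ν, rfl⟩
        have h1 : σ ((sumEquiv B rfl rfl) (Sum.inl ν)) ∈ S := by
          rw [← himg]
          exact Finset.mem_image_of_mem σ (B.orderEmbOfFin_mem rfl ν)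
        have h2 : σ ((sumEquiv B rfl rfl) (Sum.inl ν)) ∈ Set.range (S.orderEmbOfFin hS) := by
          rw [Finset.range_orderEmbOfFin]; exact h1
        obtain ⟨w, hw⟩ := h2
        refine ⟨w, ?_⟩
        show Sum.inl w = (sumEquiv S hS hSc).symm (σ ((sumEquiv B rfl rfl) (Sum.inl ν)))
        rw [← hw]
        exact ((sumEquiv S hS hSc).symm_apply_apply (Sum.inl w)).symm
      obtain ⟨⟨π, ρ⟩, hπρ⟩ := Equiv.Perm.mem_sumCongrHom_range_of_perm_mapsTo_inl hmaps
      refine ⟨(π, ρ), Finset.mem_univ _, ?_⟩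
      have hπρ' : Equiv.sumCongr π ρ
          = (((sumEquiv B rfl rfl)).trans σ).trans (sumEquiv S hS hSc).symm := hπρ
      apply Equiv.ext
      intro x
      show (sumEquiv S hS hSc) ((Equiv.sumCongr π ρ) ((sumEquiv B rfl rfl).symm x)) = σ x
      rw [hπρ']
      simp [Equiv.trans_apply, Equiv.apply_symm_apply]
    · intro p _
      rfl
  rw [← key]
  -- decompose sign
  have hdecomp : ∀ (p : Equiv.Perm (Fin B.card) × Equiv.Perm (Fin Bᶜ.card)),
      (sumEquiv B rfl rfl).symm.trans ((Equiv.sumCongr p.1 p.2).trans (sumEquiv S hS hSc))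
      = ((sumEquiv B rfl rfl).symm.trans (sumEquiv S hS hSc))
        * ((sumEquiv B rfl rfl).permCongr (Equiv.sumCongr p.1 p.2)) := by
    intro p
    apply Equiv.ext
    intro x
    show (sumEquiv S hS hSc) ((Equiv.sumCongr p.1 p.2) ((sumEquiv B rfl rfl).symm x)) = _
    simp [Equiv.Perm.mul_apply, Equiv.permCongr_apply, Equiv.trans_apply,
      Equiv.symm_apply_apply]
  have hsig : ∀ (p : Equiv.Perm (Fin B.card) × Equiv.Perm (Fin Bᶜ.card)),
      ((Equiv.Perm.sign ((sumEquiv B rfl rfl).symm.trans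
        ((Equiv.sumCongr p.1 p.2).trans (sumEquiv S hS hSc))) : ℤ) : R)
      = ((Equiv.Perm.sign ((sumEquiv B rfl rfl).symm.trans (sumEquiv S hS hSc)) : ℤ) : R)
        * ((Equiv.Perm.sign p.1 : ℤ) : R) * ((Equiv.Perm.sign p.2 : ℤ) : R) := by
    intro p
    rw [hdecomp p, _root_.map_mul]
    rw [show (sumEquiv B rfl rfl).permCongr (Equiv.sumCongr p.1 p.2)
      = Equiv.permCongr (sumEquiv B rfl rfl) (Equiv.sumCongr p.1 p.2) from rfl]
    rw [Equiv.Perm.sign_permCongr]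
    rw [show Equiv.sumCongr p.1 p.2 = Equiv.Perm.sumCongr p.1 p.2 from rfl,
      Equiv.Perm.sign_sumCongr]
    push_cast
    ring
  -- decompose product
  have hprod : ∀ (p : Equiv.Perm (Fin B.card) × Equiv.Perm (Fin Bᶜ.card)),
      (∏ i, X (((sumEquiv B rfl rfl).symm.trans
        ((Equiv.sumCongr p.1 p.2).trans (sumEquiv S hS hSc))) i) i)
      = (∏ ν : Fin B.card, X (S.orderEmbOfFin hS (p.1 ν)) (B.orderEmbOfFin rfl ν))
        * ∏ ν : Fin Bᶜ.card, X (Sᶜ.orderEmbOfFin hSc (p.2 ν)) (Bᶜ.orderEmbOfFin rfl ν) := by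
    intro p
    rw [← Equiv.prod_comp (sumEquiv B rfl rfl)
      (fun i => X (((sumEquiv B rfl rfl).symm.trans
        ((Equiv.sumCongr p.1 p.2).trans (sumEquiv S hS hSc))) i) i)]
    rw [Fintype.prod_sum_type]
    congr 1
    · apply Finset.prod_congr rfl
      intro ν _
      rw [happly]
      rfl
    · apply Finset.prod_congr rfl
      intro ν _
      rw [happly]
      rfl
  calc ∑ p : Equiv.Perm (Fin B.card) × Equiv.Perm (Fin Bᶜ.card),
      ((Equiv.Perm.sign ((sumEquiv B rfl rfl).symm.trans
        ((Equiv.sumCongr p.1 p.2).trans (sumEquiv S hS hSc))) : ℤ) : R) *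
      ∏ i, X (((sumEquiv B rfl rfl).symm.trans
        ((Equiv.sumCongr p.1 p.2).trans (sumEquiv S hS hSc))) i) i
      = ∑ p : Equiv.Perm (Fin B.card) × Equiv.Perm (Fin Bᶜ.card),
        ((Equiv.Perm.sign ((sumEquiv B rfl rfl).symm.trans (sumEquiv S hS hSc)) : ℤ) : R)
        * ((((Equiv.Perm.sign p.1 : ℤ) : R)
            * ∏ ν : Fin B.card, X (S.orderEmbOfFin hS (p.1 ν)) (B.orderEmbOfFin rfl ν))
          * (((Equiv.Perm.sign p.2 : ℤ) : R)
            * ∏ ν : Fin Bᶜ.card, X (Sᶜ.orderEmbOfFin hSc (p.2 ν)) (Bᶜ.orderEmbOfFin rfl ν))) := by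
        apply Finset.sum_congr rfl
        intro p _
        rw [hsig p, hprod p]
        ring
    _ = ((Equiv.Perm.sign ((sumEquiv B rfl rfl).symm.trans (sumEquiv S hS hSc)) : ℤ) : R)
        * ((∑ π : Equiv.Perm (Fin B.card), ((Equiv.Perm.sign π : ℤ) : R)
            * ∏ ν : Fin B.card, X (S.orderEmbOfFin hS (π ν)) (B.orderEmbOfFin rfl ν))
          * (∑ ρ : Equiv.Perm (Fin Bᶜ.card), ((Equiv.Perm.sign ρ : ℤ) : R)
            * ∏ ν : Fin Bᶜ.card, X (Sᶜ.orderEmbOfFin hSc (ρ ν)) (Bᶜ.orderEmbOfFin rfl ν))) := by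
        rw [Finset.sum_mul_sum, ← Finset.mul_sum]
        rw [Fintype.sum_prod_type]
    _ = lap X S B := by
        have hdet1 : minorM X S B = ∑ π : Equiv.Perm (Fin B.card),
            ((Equiv.Perm.sign π : ℤ) : R)
            * ∏ ν : Fin B.card, X (S.orderEmbOfFin hS (π ν)) (B.orderEmbOfFin rfl ν) := by
          rw [minorM, dif_pos hS]
          rw [det_cast_aux hS
            (M := Matrix.of fun i j : Fin S.card =>
              X (S.orderEmbOfFin rfl i) (B.orderEmbOfFin hS.symm j))
            (N := Matrix.of fun a b : Fin B.card =>
              X (S.orderEmbOfFin hS a) (B.orderEmbOfFin rfl b))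
            (fun i j => by
              simp only [Matrix.of_apply]
              rw [orderEmbOfFin_cast S hS hS rfl, orderEmbOfFin_cast B hS rfl hS.symm])]
          rw [Matrix.det_apply']
          simp only [Matrix.of_apply]
        have hdet2 : minorM X Sᶜ Bᶜ = ∑ ρ : Equiv.Perm (Fin Bᶜ.card),
            ((Equiv.Perm.sign ρ : ℤ) : R)
            * ∏ ν : Fin Bᶜ.card, X (Sᶜ.orderEmbOfFin hSc (ρ ν)) (Bᶜ.orderEmbOfFin rfl ν) := by
          rw [minorM, dif_pos hSc]
          rw [det_cast_aux hSc
            (M := Matrix.of fun i j : Fin Sᶜ.card =>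
              X (Sᶜ.orderEmbOfFin rfl i) (Bᶜ.orderEmbOfFin hSc.symm j))
            (N := Matrix.of fun a b : Fin Bᶜ.card =>
              X (Sᶜ.orderEmbOfFin hSc a) (Bᶜ.orderEmbOfFin rfl b))
            (fun i j => by
              simp only [Matrix.of_apply]
              rw [orderEmbOfFin_cast Sᶜ hSc hSc rfl, orderEmbOfFin_cast Bᶜ hSc rfl hSc.symm])]
          rw [Matrix.det_apply']
          simp only [Matrix.of_apply]
        have hsign0 := sign_sumEquiv ((∑ x ∈ S, (x:ℕ)) + ∑ x ∈ B, (x:ℕ)) S B hS hSc rfl rfl rfl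
        rw [lap, ← hdet1, ← hdet2, hsign0]
        have hE : (∑ i ∈ S, ((i:ℕ)+1) + ∑ j ∈ B, ((j:ℕ)+1))
            = ((∑ x ∈ S, (x:ℕ)) + ∑ x ∈ B, (x:ℕ)) + 2 * B.card := by
          rw [Finset.sum_add_distrib, Finset.sum_add_distrib]
          simp only [Finset.sum_const, smul_eq_mul, mul_one]
          omega
        congr 1
        rw [hE]
        push_cast
        rw [pow_add, pow_add, pow_mul]
        norm_num [← pow_add]

lemma laplace_col (X : Matrix (Fin n) (Fin n) R) (B : Finset (Fin n)) :
    X.det = ∑ S ∈ Finset.univ.filter (fun S : Finset (Fin n) => S.card = B.card), lap X S B := by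
  classical
  rw [Matrix.det_apply']
  rw [← Finset.sum_fiberwise_of_maps_to (g := fun σ : Equiv.Perm (Fin n) => B.image σ)
    (t := Finset.univ.filter (fun S : Finset (Fin n) => S.card = B.card))
    (fun σ _ => by
      simp [Finset.mem_filter, Finset.card_image_of_injective _ σ.injective])
    (fun σ => ((Equiv.Perm.sign σ : ℤ) : R) * ∏ i, X (σ i) i)]
  apply Finset.sum_congr rfl
  intro S hSmem
  exact lap_fiber X B S (Finset.mem_filter.1 hSmem).2

lemma minorM_transpose {m' n' : ℕ} (X : Matrix (Fin m') (Fin n') R) (A : Finset (Fin m'))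
    (B : Finset (Fin n')) : minorM Xᵀ B A = minorM X A B := by
  by_cases h : A.card = B.card
  · rw [minorM, dif_pos h.symm, minorM, dif_pos h]
    conv_lhs => rw [← Matrix.det_transpose]
    apply det_cast_aux h.symm
    intro i j
    simp only [Matrix.transpose_apply, Matrix.of_apply]
    rw [orderEmbOfFin_cast A h.symm rfl h.symm.symm, orderEmbOfFin_cast B h.symm h.symm rfl]
  · rw [minorM, dif_neg (fun hh => h hh.symm), minorM, dif_neg h]

lemma lap_transpose (X : Matrix (Fin n) (Fin n) R) (A T : Finset (Fin n)) :
    lap Xᵀ T A = lap X A T := by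
  rw [lap, lap, minorM_transpose X A T, minorM_transpose X Aᶜ Tᶜ,
    add_comm (∑ i ∈ T, ((i:ℕ)+1)) (∑ j ∈ A, ((j:ℕ)+1))]

end Fiber

/-- The generalized Laplace expansion: `det X = Σ_{|S|=|B|} X{S|B} = Σ_{|T|=|A|} X{A|T}`. -/
theorem statement4 {n : ℕ} {R : Type*} [CommRing R] (X : Matrix (Fin n) (Fin n) R)
    (A B : Finset (Fin n)) :
    (X.det = ∑ S ∈ Finset.univ.filter (fun S : Finset (Fin n) => S.card = B.card),
        lap X S B) ∧
    (X.det = ∑ T ∈ Finset.univ.filter (fun T : Finset (Fin n) => T.card = A.card),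
        lap X A T) := by
  constructor
  · exact laplace_col X B
  · have h := laplace_col X.transpose A
    rw [Matrix.det_transpose] at h
    rw [h]
    exact Finset.sum_congr rfl fun T _ => lap_transpose X A T
end

section
/- Let X be an n×n matrix over a commutative ring and let A, B ⊆ {1,…,n}. Then Σ_{U ⊇ A, W ⊇ B} (−1)^{|W̃|} X{U|W} = Σ_{V ⊆ B} X{A|Ṽ}, where on the left U and W range over subsets of {1,…,n} containing A and B respectively, on the right V ranges over subsets of B, and W̃, Ṽ denote complements in {1,…,n}. -/
open Finset

/-!
Expanding the two minors of `X{U|W}` as sums over permutations identifies `X{U|W}` with the sum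
of `sgn τ * ∏ j, X (τ j) j` over the permutations `τ` mapping `W` onto `U`; the sign
`(-1)^(ΣU+ΣW)` is exactly the sign of the shuffle carrying the sorted enumerations of `W, W̃` to
those of `U, Ũ`, computed by moving one element at a time down to a free neighbour (an adjacent
transposition lowering `ΣU` by one) until `U` is an initial segment.

Both sides of the identity then become the sum of `sgn τ * ∏ j, X (τ j) j` over the `τ` with
`B ∪ τ⁻¹(A) = univ`: on the right `V` is forced to be the complement of `τ⁻¹(A)`, and on the left
the alternating sum over the `W ⊇ B ∪ τ⁻¹(A)` vanishes unless that set is everything.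
-/

open Equiv

theorem Fin.covBy_iff_val_add_one_eq {n : ℕ} {a b : Fin n} : a ⋖ b ↔ (a : ℕ) + 1 = b := by
  refine ⟨fun h => ?_, fun h => ⟨Fin.lt_def.2 (by omega), fun c hac hcb => ?_⟩⟩
  · have hab := Fin.lt_def.1 h.lt
    by_contra hne
    exact h.2 (c := ⟨a + 1, by omega⟩) (Fin.lt_def.2 (by simp)) (Fin.lt_def.2 (by simp; omega))
  · rw [Fin.lt_def] at hac hcb; omega

theorem strictMonoOn_swap_of_covBy {α : Type*} [LinearOrder α] {v u : α} (h : v ⋖ u)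
    {s : Set α} (hs : ¬ (v ∈ s ∧ u ∈ s)) : StrictMonoOn (swap v u) s := by
  intro x hx y hy hxy
  have h1 : ∀ c, c < u → c ≤ v := fun c => h.le_of_lt
  have h2 : ∀ c, v < c → u ≤ c := fun c => h.ge_of_gt
  have := h.lt
  simp only [swap_apply_def]
  split_ifs <;> grind

namespace Finset

theorem orderEmbOfFin_image_of_strictMonoOn {α β : Type*} [LinearOrder α] [LinearOrder β]
    {s : Finset α} {f : α → β} (hf : StrictMonoOn f s) {k : ℕ} (h : s.card = k)
    (h' : (s.image f).card = k) (i : Fin k) :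
    (s.image f).orderEmbOfFin h' i = f (s.orderEmbOfFin h i) := by
  refine (congrFun (orderEmbOfFin_unique h' (f := fun i => f (s.orderEmbOfFin h i))
    (fun i => mem_image_of_mem f (orderEmbOfFin_mem s h i)) ?_) i).symm
  exact fun i j hij => hf (orderEmbOfFin_mem s h i) (orderEmbOfFin_mem s h j)
    ((s.orderEmbOfFin h).strictMono hij)

theorem exists_covBy_of_not_isLowerSet {α : Type*} [PartialOrder α] [LocallyFiniteOrder α]
    {s : Finset α} (hs : ¬ IsLowerSet (s : Set α)) : ∃ v u, v ⋖ u ∧ v ∉ s ∧ u ∈ s := by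
  rw [← Set.antitone_mem, antitone_iff_forall_covBy] at hs
  push Not at hs
  obtain ⟨v, u, h, hvu⟩ := hs
  simp only [lt_iff_le_not_ge, le_Prop_eq, mem_coe] at hvu
  exact ⟨v, u, h, by tauto⟩

theorem eq_of_isLowerSet_of_card_eq {α : Type*} [LinearOrder α] {s t : Finset α}
    (hs : IsLowerSet (s : Set α)) (ht : IsLowerSet (t : Set α)) (h : s.card = t.card) :
    s = t := by
  rcases hs.total ht with hst | hts
  · exact eq_of_subset_of_card_le (coe_subset.1 hst) h.ge
  · exact (eq_of_subset_of_card_le (coe_subset.1 hts) h.le).symm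

theorem sum_val_image_swap_add_one {n : ℕ} {v u : Fin n} (h : v ⋖ u) {s : Finset (Fin n)}
    (hv : v ∉ s) (hu : u ∈ s) :
    ∑ i ∈ s.image (swap v u), (i : ℕ) + 1 = ∑ i ∈ s, (i : ℕ) := by
  have hfix : ∑ x ∈ s.erase u, (swap v u x : ℕ) = ∑ x ∈ s.erase u, (x : ℕ) :=
    sum_congr rfl fun x hx => by
      rw [swap_apply_of_ne_of_ne (ne_of_mem_of_not_mem (mem_of_mem_erase hx) hv)
        (ne_of_mem_erase hx)]
  rw [sum_image fun x _ y _ hxy => (swap v u).injective hxy, ← add_sum_erase s _ hu,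
    ← add_sum_erase s _ hu, swap_apply_right, hfix, ← Fin.covBy_iff_val_add_one_eq.1 h]
  ring

end Finset

theorem finSumEquivOfFinset_image {α : Type*} [Fintype α] [LinearOrder α] {e : Perm α}
    {s : Finset α} (he : StrictMonoOn e s) (he' : StrictMonoOn e ↑sᶜ) {k l : ℕ}
    (hk : s.card = k) (hl : sᶜ.card = l) (hk' : (s.image e).card = k)
    (hl' : (s.image e)ᶜ.card = l) :
    finSumEquivOfFinset hk' hl' = (finSumEquivOfFinset hk hl).trans e := by
  have hc : (s.image e)ᶜ = sᶜ.image e := by ext x; simp [← e.eq_symm_apply]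
  ext (i | j) : 1
  · simp [finSumEquivOfFinset_inl, orderEmbOfFin_image_of_strictMonoOn he hk]
  · simp only [finSumEquivOfFinset_inr, trans_apply]
    rw [← orderEmbOfFin_image_of_strictMonoOn he' hl (hc ▸ hl')]
    congr

theorem Equiv.Perm.sign_symm_trans_comm {α β : Type*} [Fintype β] [DecidableEq β]
    (e f : α ≃ β) : Perm.sign (e.symm.trans f) = Perm.sign (f.symm.trans e) := by
  rw [← Perm.sign_symm]; rfl

section Shuffle
variable {n k l : ℕ}

theorem sign_symm_trans_finSumEquivOfFinset_image_swap (f : Fin k ⊕ Fin l ≃ Fin n)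
    {v u : Fin n} (h : v ⋖ u) {s : Finset (Fin n)} (hv : v ∉ s) (hu : u ∈ s) (hk : s.card = k)
    (hl : sᶜ.card = l) (hk' : (s.image (swap v u)).card = k)
    (hl' : (s.image (swap v u))ᶜ.card = l) :
    Perm.sign (f.symm.trans (finSumEquivOfFinset hk' hl')) =
      -Perm.sign (f.symm.trans (finSumEquivOfFinset hk hl)) := by
  rw [finSumEquivOfFinset_image (strictMonoOn_swap_of_covBy h (by simp [hv]))
    (strictMonoOn_swap_of_covBy h (by simp [hu])) hk hl]
  change Perm.sign (swap v u * f.symm.trans (finSumEquivOfFinset hk hl)) = _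
  rw [Perm.sign_mul, Perm.sign_swap h.ne, neg_one_mul]

theorem sign_symm_trans_finSumEquivOfFinset (s t : Finset (Fin n)) (hs : s.card = k)
    (hs' : sᶜ.card = l) (ht : t.card = k) (ht' : tᶜ.card = l) :
    Perm.sign ((finSumEquivOfFinset ht ht').symm.trans (finSumEquivOfFinset hs hs')) =
      (-1) ^ (∑ i ∈ s, (i : ℕ) + ∑ j ∈ t, (j : ℕ)) := by
  induction hN : ∑ i ∈ s, (i : ℕ) + ∑ j ∈ t, (j : ℕ) using Nat.strong_induction_on
    generalizing s t with
  | _ N ih =>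
  wlog hsl : ¬ IsLowerSet (s : Set (Fin n)) generalizing s t
  · by_cases htl : IsLowerSet (t : Set (Fin n))
    · obtain rfl := eq_of_isLowerSet_of_card_eq (not_not.1 hsl) htl (hs.trans ht.symm)
      rw [symm_trans_self, Perm.sign_refl, ← hN]
      exact (Even.neg_one_pow ⟨_, rfl⟩).symm
    · rw [Perm.sign_symm_trans_comm]
      exact this t s ht ht' hs hs' (by rw [← hN, add_comm]) htl
  obtain ⟨v, u, hvu, hv, hu⟩ := exists_covBy_of_not_isLowerSet hsl
  have hsum := sum_val_image_swap_add_one hvu hv hu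
  have hs₁ : (s.image (swap v u)).card = k := by
    rw [card_image_of_injective _ (swap v u).injective, hs]
  have hs₁' : (s.image (swap v u))ᶜ.card = l := by
    rw [card_compl, hs₁, ← hs, ← card_compl, hs']
  rw [← neg_neg (Perm.sign _), ← sign_symm_trans_finSumEquivOfFinset_image_swap _ hvu hv hu
    hs hs' hs₁ hs₁', ih _ (by omega) _ t hs₁ hs₁' ht ht' rfl, ← hN,
    ← hsum, add_right_comm, pow_succ]
  simp

end Shuffle

namespace Matrix

section Blocks
variable {ι R : Type*} [Fintype ι] [DecidableEq ι] [CommRing R]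

def restrictToBlocks (X : Matrix ι ι R) (U W : Finset ι) : Matrix ι ι R :=
  of fun i j => if (i ∈ U ↔ j ∈ W) then X i j else 0

theorem det_restrictToBlocks (X : Matrix ι ι R) (U W : Finset ι) :
    (X.restrictToBlocks U W).det = ∑ τ : Perm ι,
      if ∀ j, τ j ∈ U ↔ j ∈ W then Perm.sign τ * ∏ j, X (τ j) j else 0 := by
  rw [det_apply']
  refine sum_congr rfl fun τ _ => ?_
  simp only [restrictToBlocks, of_apply, prod_ite_zero, mem_univ, true_implies, mul_ite, mul_zero]

theorem det_submatrix_equiv {m : Type*} [Fintype m] [DecidableEq m] (X : Matrix ι ι R)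
    (e f : m ≃ ι) : (X.submatrix e f).det = Perm.sign (f.symm.trans e) * X.det := by
  rw [← det_permute, ← det_submatrix_equiv_self f]
  congr 1; ext i j; simp

end Blocks

theorem submatrix_finSumEquivOfFinset_restrictToBlocks {n : ℕ} {R : Type*} [CommRing R]
    (X : Matrix (Fin n) (Fin n) R) (U W : Finset (Fin n)) (hUW : U.card = W.card)
    (hUWc : Uᶜ.card = Wᶜ.card) :
    (X.restrictToBlocks U W).submatrix (finSumEquivOfFinset rfl rfl)
        (finSumEquivOfFinset hUW.symm hUWc.symm) =
      fromBlocks (of fun i j => X (U.orderEmbOfFin rfl i) (W.orderEmbOfFin hUW.symm j)) 0 0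
        (of fun i j => X (Uᶜ.orderEmbOfFin rfl i) (Wᶜ.orderEmbOfFin hUWc.symm j)) := by
  have hU := U.orderEmbOfFin_mem (rfl : U.card = U.card)
  have hUc := Uᶜ.orderEmbOfFin_mem (rfl : Uᶜ.card = Uᶜ.card)
  have hW := W.orderEmbOfFin_mem hUW.symm
  have hWc := Wᶜ.orderEmbOfFin_mem hUWc.symm
  simp only [mem_compl] at hUc hWc
  ext (i | i) (j | j) <;> simp [restrictToBlocks, hU, hUc, hW, hWc]

end Matrix

theorem Equiv.Perm.forall_apply_mem_iff_iff_eq_image {α : Type*} [DecidableEq α] (τ : Perm α)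
    (U W : Finset α) : (∀ j, τ j ∈ U ↔ j ∈ W) ↔ U = W.image τ := by
  constructor
  · intro h; ext x; simpa [← τ.eq_symm_apply] using h (τ.symm x)
  · rintro rfl j; simp

theorem lap_eq_det_restrictToBlocks {n : ℕ} {R : Type*} [CommRing R]
    (X : Matrix (Fin n) (Fin n) R) (U W : Finset (Fin n)) :
    lap X U W = (X.restrictToBlocks U W).det := by
  by_cases hUW : U.card = W.card
  · have hUWc : Uᶜ.card = Wᶜ.card := by rw [card_compl, card_compl, hUW]
    have hminors : minorM X U W * minorM X Uᶜ Wᶜ =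
        Perm.sign ((finSumEquivOfFinset hUW.symm hUWc.symm).symm.trans
          (finSumEquivOfFinset rfl rfl)) * (X.restrictToBlocks U W).det := by
      rw [minorM, minorM, dif_pos hUW, dif_pos hUWc, ← Matrix.det_fromBlocks_zero₂₁,
        ← Matrix.submatrix_finSumEquivOfFinset_restrictToBlocks X U W hUW hUWc,
        Matrix.det_submatrix_equiv]
    have hexp : ∑ i ∈ U, ((i : ℕ) + 1) + ∑ j ∈ W, ((j : ℕ) + 1) =
        (∑ i ∈ U, (i : ℕ) + ∑ j ∈ W, (j : ℕ)) + 2 * U.card := by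
      simp only [sum_add_distrib, sum_const, smul_eq_mul, mul_one, hUW]; ring
    rw [lap, hminors, sign_symm_trans_finSumEquivOfFinset U W rfl rfl hUW.symm hUWc.symm, hexp,
      ← mul_assoc, pow_add, pow_mul]
    push_cast
    rw [neg_one_sq, one_pow, mul_one, ← pow_add, ← two_mul, pow_mul, neg_one_sq, one_pow, one_mul]
  · have hdet : (X.restrictToBlocks U W).det = 0 := by
      refine (Matrix.det_restrictToBlocks X U W).trans (sum_eq_zero fun τ _ => if_neg fun h => ?_)
      rw [Perm.forall_apply_mem_iff_iff_eq_image] at h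
      exact hUW (h ▸ card_image_of_injective W τ.injective)
    rw [lap, minorM, dif_neg hUW, hdet, zero_mul, mul_zero]

section SupersetSums
variable {α R : Type*} [Fintype α] [DecidableEq α] [CommRing R]

theorem Finset.sum_superset_neg_one_pow_card_compl (C : Finset α) :
    ∑ W ∈ univ.filter (C ⊆ ·), (-1 : R) ^ Wᶜ.card = if C = univ then 1 else 0 := by
  have hcompl : ∑ W ∈ univ.filter (C ⊆ ·), (-1 : R) ^ Wᶜ.card =
      ∑ S ∈ Cᶜ.powerset, (-1 : R) ^ S.card :=
    sum_nbij' (fun W => Wᶜ) (fun S => Sᶜ) (by simp) (by simp [subset_compl_comm])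
      (by simp) (by simp) (by simp)
  have := congrArg (Int.cast : ℤ → R) (sum_powerset_neg_one_pow_card (x := Cᶜ))
  push_cast at this
  rw [hcompl, this]
  simp only [compl_eq_empty_iff]

theorem Equiv.Perm.sum_superset_sum_superset_ite_forall_apply_mem_iff (τ : Perm α)
    (A B : Finset α) (x : R) :
    ∑ U ∈ univ.filter (A ⊆ ·), ∑ W ∈ univ.filter (B ⊆ ·),
        (-1 : R) ^ Wᶜ.card * (if ∀ j, τ j ∈ U ↔ j ∈ W then x else 0) =
      if ∀ j, j ∈ B ∨ τ j ∈ A then x else 0 := by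
  set C := univ.filter (τ · ∈ A)
  have hU : ∀ W : Finset α, ∑ U ∈ univ.filter (A ⊆ ·), (if ∀ j, τ j ∈ U ↔ j ∈ W then x else 0) =
      if C ⊆ W then x else 0 := by
    intro W
    simp_rw [forall_apply_mem_iff_iff_eq_image, sum_ite_eq', mem_filter, mem_univ, true_and]
    congr 1
    simp only [C, subset_iff, mem_image, mem_filter, mem_univ, true_and, eq_iff_iff]
    exact ⟨fun h j hj => by obtain ⟨a, ha, hj⟩ := h hj; rwa [← τ.injective hj],
      fun h a ha => ⟨τ.symm a, h (by simpa), τ.apply_symm_apply a⟩⟩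
  have hBC : (univ.filter (B ⊆ ·)).filter (C ⊆ ·) = univ.filter (B ∪ C ⊆ ·) := by
    ext W; simp [union_subset_iff]
  rw [sum_comm]
  simp_rw [← mul_sum, hU, mul_ite, mul_zero]
  rw [← sum_filter, hBC, ← sum_mul, sum_superset_neg_one_pow_card_compl, ite_mul, one_mul,
    zero_mul]
  congr 1
  simp [C, eq_univ_iff_forall]

theorem Equiv.Perm.sum_powerset_ite_forall_apply_mem_iff_compl (τ : Perm α) (A B : Finset α)
    (x : R) :
    ∑ V ∈ B.powerset, (if ∀ j, τ j ∈ A ↔ j ∈ Vᶜ then x else 0) =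
      if ∀ j, j ∈ B ∨ τ j ∈ A then x else 0 := by
  have hV : ∀ V : Finset α, (∀ j, τ j ∈ A ↔ j ∈ Vᶜ) ↔ V = univ.filter (τ · ∉ A) := by
    simp [Finset.ext_iff, iff_not_comm]
  simp_rw [hV, sum_ite_eq', mem_powerset]
  simp [subset_iff, or_iff_not_imp_right]

end SupersetSums

/-- Corollary 2: `Σ_{U ⊇ A, W ⊇ B} (-1)^{|W̃|} X{U|W} = Σ_{V ⊆ B} X{A|Ṽ}`. -/
theorem statement7 {n : ℕ} {R : Type*} [CommRing R] (X : Matrix (Fin n) (Fin n) R)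
    (A B : Finset (Fin n)) :
    ∑ U ∈ Finset.univ.filter (fun U : Finset (Fin n) => A ⊆ U),
      ∑ W ∈ Finset.univ.filter (fun W : Finset (Fin n) => B ⊆ W),
        (-1 : R) ^ Wᶜ.card * lap X U W =
      ∑ V ∈ B.powerset, lap X A Vᶜ := by
  simp only [lap_eq_det_restrictToBlocks, Matrix.det_restrictToBlocks, mul_sum]
  rw [sum_congr rfl fun U _ => sum_comm, sum_comm, sum_comm (s := B.powerset)]
  refine sum_congr rfl fun τ _ => ?_
  rw [τ.sum_superset_sum_superset_ite_forall_apply_mem_iff,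
    τ.sum_powerset_ite_forall_apply_mem_iff_compl]
end

section
/- Let U′, U″ be finite subsets of a totally ordered set, k = |U′| + |U″|, and let f : {1,…,k} → U′ ∪ U″ together with the partition {1,…,k} = K′ ⊔ K″ satisfy: f is order preserving, f maps K′ order-isomorphically onto U′ and K″ order-isomorphically onto U″, and whenever f(a) = f(b) with a < b then a ∈ K′ and b ∈ K″. If P ⊆ {1,…,k} is a subset on which f is injective and P < K′ (in the partial order on subsets), then f(P) < f(K′) = U′. -/
open Finset

/-! `f` is strictly increasing on `P` and on `K′`, so it carries the increasing enumerations of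
`P` and `K′` to those of `f(P)` and `U′`, and `P ≤ K′` transfers termwise along the monotone `f`.
If `f(P) = U′`, the `ν`-th elements `p_ν ≤ k_ν` have the same image; `p_ν < k_ν` would force
`k_ν ∈ K″`, which is disjoint from `K′`, so `P = K′`. -/

theorem Finset.sort_image_of_strictMonoOn {α β : Type*} [LinearOrder α] [LinearOrder β]
    {f : α → β} {s : Finset α} (hf : StrictMonoOn f s) :
    (s.image f).sort (· ≤ ·) = (s.sort (· ≤ ·)).map f := by
  have hval : (s.image f).val = s.val.map f :=
    Multiset.dedup_eq_self.2 (s.nodup.map_on fun _ ha _ hb h => hf.injOn ha hb h)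
  rw [← sort_val, hval, ← sort_val]
  exact (Multiset.map_sort f s.val _ _ fun _ ha _ hb => (hf.le_iff_le ha hb).symm).symm

section domLE

variable {α β : Type*} [LinearOrder α] [LinearOrder β] {f : α → β} {S T : Finset α}

theorem domLE_image (hf : Monotone f) (hS : Set.InjOn f S) (hT : Set.InjOn f T)
    (h : domLE S T) : domLE (S.image f) (T.image f) := by
  obtain ⟨hcard, hle⟩ := h
  refine ⟨by rwa [card_image_of_injOn hS, card_image_of_injOn hT], fun ν hνT hνS => ?_⟩
  simp only [sort_image_of_strictMonoOn ((hf.monotoneOn _).strictMonoOn_of_injOn hS),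
    sort_image_of_strictMonoOn ((hf.monotoneOn _).strictMonoOn_of_injOn hT),
    List.getElem_map, List.length_map] at hνT hνS ⊢
  exact hf (hle ν hνT hνS)

theorem eq_of_domLE_of_image_eq (hf : Monotone f) (hS : Set.InjOn f S) (hT : Set.InjOn f T)
    (h : domLE S T) (himage : S.image f = T.image f)
    (hcollapse : ∀ a b, f a = f b → a < b → b ∉ T) : S = T := by
  have hsort : (S.sort (· ≤ ·)).map f = (T.sort (· ≤ ·)).map f := by
    rw [← sort_image_of_strictMonoOn ((hf.monotoneOn _).strictMonoOn_of_injOn hS),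
      ← sort_image_of_strictMonoOn ((hf.monotoneOn _).strictMonoOn_of_injOn hT), himage]
  suffices S.sort (· ≤ ·) = T.sort (· ≤ ·) by
    rw [← sort_toFinset S (· ≤ ·), ← sort_toFinset T (· ≤ ·), this]
  refine List.ext_getElem (by simpa using congrArg List.length hsort) fun ν hνS hνT => ?_
  have hfeq : f (S.sort (· ≤ ·))[ν] = f (T.sort (· ≤ ·))[ν] := by
    simpa [List.getElem?_eq_getElem hνS, List.getElem?_eq_getElem hνT] using
      congrArg (·[ν]?) hsort
  refine (h.2 ν hνT hνS).eq_of_not_lt fun hlt => hcollapse _ _ hfeq hlt ?_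
  exact (mem_sort _).1 (List.getElem_mem hνT)

end domLE

theorem statement11_general {α : Type*} [LinearOrder α] (U' U'' : Finset α)
    (f : Fin (U'.card + U''.card) → α)
    (K' K'' : Finset (Fin (U'.card + U''.card)))
    (hf : Monotone f)
    (hdisj : Disjoint K' K'')
    (hinj' : Set.InjOn f ↑K') (him' : K'.image f = U')
    (hb : ∀ a b, f a = f b → a < b → a ∈ K' ∧ b ∈ K'')
    (P : Finset (Fin (U'.card + U''.card)))
    (hPinj : Set.InjOn f ↑P)
    (hP : domLE P K' ∧ P ≠ K') :
    domLE (P.image f) U' ∧ P.image f ≠ U' := by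
  obtain ⟨hle, hne⟩ := hP
  have hdom := domLE_image hf hPinj hinj' hle
  rw [him'] at hdom
  refine ⟨hdom, fun himage => hne ?_⟩
  refine eq_of_domLE_of_image_eq hf hPinj hinj' hle (himage.trans him'.symm) ?_
  exact fun a b hab hlt hbK' => disjoint_left.mp hdisj hbK' (hb a b hab hlt).2

/-- Lemma 3: in the situation of Lemma 2, if `f` is injective on `P ⊆ {1,…,k}` and
`P < K′` in the partial order on subsets, then `f(P) < f(K′) = U′`. -/
theorem statement11 {α : Type*} [LinearOrder α] (U' U'' : Finset α)
    (f : Fin (U'.card + U''.card) → α)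
    (K' K'' : Finset (Fin (U'.card + U''.card)))
    (hf : Monotone f)
    (hdisj : Disjoint K' K'') (hcover : K' ∪ K'' = Finset.univ)
    (hinj' : Set.InjOn f ↑K') (him' : K'.image f = U')
    (hinj'' : Set.InjOn f ↑K'') (him'' : K''.image f = U'')
    (hb : ∀ a b, f a = f b → a < b → a ∈ K' ∧ b ∈ K'')
    (P : Finset (Fin (U'.card + U''.card)))
    (hPinj : Set.InjOn f ↑P)
    (hP : domLE P K' ∧ P ≠ K') :
    domLE (P.image f) U' ∧ P.image f ≠ U' :=
  statement11_general U' U'' f K' K'' hf hdisj hinj' him' hb P hPinj hP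
end
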